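/- arXiv:1109.3322 — 9 statements merged into one kernel-verified Lean document; each statement's English description precedes it below -/
import Mathlib

section
/- For all messages m and m', the implication m → m' is valid (i.e., holds in every legal state) if and only if m = m' or m' is part of the message m. -/
/-- Messages: `send i l G` is a message with note `l` sent by `i` to group `G`;
`fwd i l m G` is the forward by `i` of message `m` with appended note `l`, sent to `G`. -/
inductive Msg (Agent Note : Type) where
  | send : Agent → Note → Finset Agent → Msg Agent Note
  | fwd  : Agent → Note → Msg Agent Note → Finset Agent → Msg Agent Note
  deriving DecidableEq

namespace Msg
variable {Agent Note : Type}

/-- The sender of a message. -/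
def sender : Msg Agent Note → Agent
  | send i _ _ => i
  | fwd i _ _ _ => i

/-- The group of regular recipients of a message. -/
def recip : Msg Agent Note → Finset Agent
  | send _ _ G => G
  | fwd _ _ _ G => G

/-- `S(m)`: the singleton set consisting of the sender. -/
def S (m : Msg Agent Note) : Finset Agent := {m.sender}

/-- Factual information `FI(m)` contained in a message. -/
def FI : Msg Agent Note → Set Note
  | send _ l _ => {l}
  | fwd _ l m _ => FI m ∪ {l}

/-- Wellformedness: all recipient groups are nonempty. -/
def WF : Msg Agent Note → Prop
  | send _ _ G => G.Nonempty
  | fwd _ _ m G => G.Nonempty ∧ m.WF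

/-- `PartOf m' m` : message `m'` is part of the message `m`. -/
inductive PartOf : Msg Agent Note → Msg Agent Note → Prop
  | base (i : Agent) (l : Note) (m : Msg Agent Note) (G : Finset Agent) :
      PartOf m (fwd i l m G)
  | step (i : Agent) (l : Note) (m m' : Msg Agent Note) (G : Finset Agent) :
      PartOf m' m → PartOf m' (fwd i l m G)

end Msg

/-- An email `m_B`: a message together with a set of BCC recipients. -/
structure Email (Agent Note : Type) where
  msg : Msg Agent Note
  bcc : Finset Agent
  deriving DecidableEq

namespace Email
variable {Agent Note : Type} [DecidableEq Agent]

/-- All agents involved in the email: the sender, regular recipients and BCC recipients. -/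
def agents (e : Email Agent Note) : Finset Agent := e.msg.S ∪ e.msg.recip ∪ e.bcc

/-- Wellformedness of an email: the message is wellformed and
`(S(m) ∪ R(m)) ∩ B = ∅`. -/
def WF (e : Email Agent Note) : Prop :=
  e.msg.WF ∧ (e.msg.S ∪ e.msg.recip) ∩ e.bcc = ∅

/-- Indistinguishability of emails for agent `i`. -/
def sim (i : Agent) (e e' : Email Agent Note) : Prop :=
  e.msg = e'.msg ∧
    ((i ∈ e.msg.S ∧ e.bcc = e'.bcc) ∨ i ∈ e.msg.recip \ e.msg.S ∨ i ∈ e.bcc ∩ e'.bcc)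

/-- The email `e` is shared by the group `A`. -/
def SharedBy (A : Finset Agent) (e : Email Agent Note) : Prop :=
  A ⊆ e.msg.S ∪ e.msg.recip ∨ ∃ j ∈ e.bcc, A ⊆ e.msg.S ∪ {j}

end Email

/-- A state: a finite set of emails together with the initial notes of each agent. -/
structure EState (Agent Note : Type) where
  emails : Finset (Email Agent Note)
  notes : Agent → Set Note

namespace EState
variable {Agent Note : Type} [DecidableEq Agent]

/-- The basic requirements on a state: all its emails are wellformed and
it contains at most one email per message. -/
def WF (s : EState Agent Note) : Prop :=
  (∀ e ∈ s.emails, e.WF) ∧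
  ∀ e ∈ s.emails, ∀ e' ∈ s.emails, e.msg = e'.msg → e = e'

/-- Legality of a state: there is a strict partial order on its emails
satisfying conditions L1, L2, L3. -/
def Legal (s : EState Agent Note) : Prop :=
  s.WF ∧
  ∃ r : Email Agent Note → Email Agent Note → Prop,
    (∀ e ∈ s.emails, ¬ r e e) ∧
    (∀ e ∈ s.emails, ∀ e' ∈ s.emails, ∀ e'' ∈ s.emails, r e e' → r e' e'' → r e e'') ∧
    -- L1
    (∀ e ∈ s.emails, ∀ (i : Agent) (l : Note) (m : Msg Agent Note) (G : Finset Agent),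
      e.msg = Msg.fwd i l m G →
      ∃ e' ∈ s.emails, e'.msg = m ∧ r e' e ∧ i ∈ m.S ∪ m.recip ∪ e'.bcc) ∧
    -- L2
    (∀ e ∈ s.emails, ∀ (i : Agent) (l : Note) (G : Finset Agent),
      e.msg = Msg.send i l G → l ∉ s.notes i →
      ∃ e' ∈ s.emails, r e' e ∧ i ∈ e'.msg.recip ∪ e'.bcc ∧ l ∈ e'.msg.FI) ∧
    -- L3
    (∀ e ∈ s.emails, ∀ (i : Agent) (l : Note) (m : Msg Agent Note) (G : Finset Agent),
      e.msg = Msg.fwd i l m G → l ∉ s.notes i →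
      ∃ e' ∈ s.emails, r e' e ∧ i ∈ e'.msg.recip ∪ e'.bcc ∧ l ∈ e'.msg.FI)

/-- Indistinguishability of states for agent `i`. -/
def sim (i : Agent) (s s' : EState Agent Note) : Prop :=
  s.notes i = s'.notes i ∧
  (∀ e ∈ s.emails, i ∈ e.agents → ∃ e' ∈ s'.emails, e.sim i e') ∧
  (∀ e' ∈ s'.emails, i ∈ e'.agents → ∃ e ∈ s.emails, e.sim i e')

/-- `~_A`: the reflexive transitive closure of the union of the relations `~_i`, `i ∈ A`. -/
def simG (G : Finset Agent) : EState Agent Note → EState Agent Note → Prop :=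
  Relation.ReflTransGen (fun t t' => ∃ i ∈ G, t.sim i t')

end EState

/-- Formulas of the epistemic language (with a trivially true formula `tt`
used to form finite conjunctions). -/
inductive Form (Agent Note : Type) where
  | tt   : Form Agent Note
  | msg  : Msg Agent Note → Form Agent Note
  | recv : Agent → Msg Agent Note → Form Agent Note
  | neg  : Form Agent Note → Form Agent Note
  | and  : Form Agent Note → Form Agent Note → Form Agent Note
  | ck   : Finset Agent → Form Agent Note → Form Agent Note

namespace Form
variable {Agent Note : Type}

def imp (φ ψ : Form Agent Note) : Form Agent Note := neg (and φ (neg ψ))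

def iff (φ ψ : Form Agent Note) : Form Agent Note := and (imp φ ψ) (imp ψ φ)

def bigAnd : List (Form Agent Note) → Form Agent Note
  | [] => tt
  | φ :: l => and φ (bigAnd l)

end Form

/-- Truth of a formula in a state. -/
def Sat {Agent Note : Type} [DecidableEq Agent] :
    EState Agent Note → Form Agent Note → Prop
  | _, .tt => True
  | s, .msg m => ∃ B, (⟨m, B⟩ : Email Agent Note) ∈ s.emails
  | s, .recv i m => ∃ B, (⟨m, B⟩ : Email Agent Note) ∈ s.emails ∧ i ∈ m.S ∪ m.recip ∪ B
  | s, .neg φ => ¬ Sat s φ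
  | s, .and φ ψ => Sat s φ ∧ Sat s ψ
  | s, .ck G φ => ∀ s', EState.Legal s' → EState.simG G s s' → Sat s' φ

/-- Validity: truth in all legal states. -/
def Valid {Agent Note : Type} [DecidableEq Agent] (φ : Form Agent Note) : Prop :=
  ∀ s : EState Agent Note, s.Legal → Sat s φ

/-- The formula `m_B` expressing that the message `m` was sent with exactly `B`
as the set of BCC recipients. -/
noncomputable def Email.form {Agent Note : Type} [DecidableEq Agent] [Fintype Agent]
    (e : Email Agent Note) : Form Agent Note :=
  .and (.msg e.msg)
    (.and (Form.bigAnd (e.agents.toList.map fun i => .recv i e.msg))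
      (Form.bigAnd ((e.agentsᶜ : Finset Agent).toList.map fun i => .neg (.recv i e.msg))))

/-- The epistemic information `EI(m)` contained in a message. -/
def Msg.EIF {Agent Note : Type} [DecidableEq Agent] : Msg Agent Note → Form Agent Note
  | .send i l G => .ck ({i} ∪ G) (.msg (.send i l G))
  | .fwd i l m G => .ck ({i} ∪ G) (.and (.msg (.fwd i l m G)) (EIF m))

/-- The epistemic information `EI(m_B)` contained in an email. -/
noncomputable def Email.EIF {Agent Note : Type} [DecidableEq Agent] [Fintype Agent]
    (e : Email Agent Note) : Form Agent Note :=
  .and e.msg.EIF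
    (.and (Form.bigAnd (e.bcc.toList.map fun i =>
        .ck (e.msg.S ∪ {i}) (.and e.msg.EIF (.recv i e.msg))))
      (.ck e.msg.S e.form))

/-- The information gain `IG(m_B, i)` of an agent from an email. -/
noncomputable def Email.IG {Agent Note : Type} [DecidableEq Agent] [Fintype Agent]
    (e : Email Agent Note) (i : Agent) : Form Agent Note :=
  if e.msg.sender = i then e.EIF
  else if i ∈ e.msg.recip then e.msg.EIF
  else .ck (e.msg.S ∪ {i}) (.and e.msg.EIF (.recv i e.msg))

/-- The strict partial order `<` on emails: `e < e'` iff the messages differ and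
`m' → m` is valid. -/
def emailLt {Agent Note : Type} [DecidableEq Agent] (e e' : Email Agent Note) : Prop :=
  e.msg ≠ e'.msg ∧ Valid (Form.imp (.msg e'.msg) (.msg e.msg))

/-- `E_A`: the set of emails of `E` shared by the group `A`. -/
noncomputable def sharedSet {Agent Note : Type} [DecidableEq Agent]
    (E : Finset (Email Agent Note)) (A : Finset Agent) : Finset (Email Agent Note) :=
  @Finset.filter _ (fun e => e.SharedBy A) (fun _ => Classical.propDecidable _) E

/-- The downward closure `E'_≤` of `E' ⊆ E` w.r.t. the order `<`. -/
noncomputable def downClosure {Agent Note : Type} [DecidableEq Agent] [DecidableEq Note]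
    (E E' : Finset (Email Agent Note)) : Finset (Email Agent Note) :=
  E' ∪ @Finset.filter _ (fun e => ∃ e' ∈ E', emailLt e e')
    (fun _ => Classical.propDecidable _) E

/-- The state `s \ m_B`: removing the email from the state while augmenting the
initial notes of its recipients with the factual information of its message. -/
def EState.remove {Agent Note : Type} [DecidableEq Agent] [DecidableEq Note]
    (s : EState Agent Note) (e : Email Agent Note) : EState Agent Note :=
  ⟨s.emails.erase e,
   fun i => if i ∈ e.msg.recip ∪ e.bcc then s.notes i ∪ e.msg.FI else s.notes i⟩

/-- The state `s[m_{B ↦ C}]`: shrinking the BCC set of the email `e = m_B` to `C`,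
augmenting the initial notes of the agents in `B \ C`. -/
def EState.shrink {Agent Note : Type} [DecidableEq Agent] [DecidableEq Note]
    (s : EState Agent Note) (e : Email Agent Note) (C : Finset Agent) : EState Agent Note :=
  ⟨insert ⟨e.msg, C⟩ (s.emails.erase e),
   fun i => if i ∈ e.bcc \ C then s.notes i ∪ e.msg.FI else s.notes i⟩

/-- A mailbox assigns to every agent a set of messages. -/
abbrev Mailbox (Agent Note : Type) := Agent → Set (Msg Agent Note)

/-- A configuration: a state together with a mailbox. -/
abbrev Config (Agent Note : Type) := EState Agent Note × Mailbox Agent Note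

/-- The conditions under which an email with the given message can be processed. -/
def CanProcess {Agent Note : Type} (L : Agent → Set Note) (σ : Mailbox Agent Note) :
    Msg Agent Note → Prop
  | .send i l _ => l ∈ L i ∨ ∃ m' ∈ σ i, l ∈ Msg.FI m'
  | .fwd i l m' _ => m' ∈ σ i ∧ (l ∈ L i ∨ ∃ m'' ∈ σ i, l ∈ Msg.FI m'')

/-- Delivery of an email: the message is added to the mailboxes of the sender,
the regular recipients and the BCC recipients. -/
def deliver {Agent Note : Type} [DecidableEq Agent] (σ : Mailbox Agent Note)
    (e : Email Agent Note) : Mailbox Agent Note :=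
  fun j => if j ∈ e.agents then σ j ∪ {e.msg} else σ j

/-- An atomic transition between configurations, processing one email. -/
def Step {Agent Note : Type} [DecidableEq Agent] [DecidableEq Note]
    (c c' : Config Agent Note) : Prop :=
  ∃ e ∈ c.1.emails, CanProcess c.1.notes c.2 e.msg ∧
    c'.1 = ⟨c.1.emails.erase e, c.1.notes⟩ ∧ c'.2 = deliver c.2 e

/-- The initial configuration: the state together with the empty mailbox. -/
def startConfig {Agent Note : Type} (s : EState Agent Note) : Config Agent Note :=
  (s, fun _ => ∅)

/-- An email exchange starting in `s`: a maximal sequence of atomic transitions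
starting in the configuration `⟨s, σ₀⟩`. -/
def IsExchange {Agent Note : Type} [DecidableEq Agent] [DecidableEq Note]
    (s : EState Agent Note) (cs : List (Config Agent Note)) : Prop :=
  List.Chain Step (startConfig s) cs ∧
  ∀ c', ¬ Step ((startConfig s :: cs).getLast (List.cons_ne_nil _ _)) c'

/-- An email exchange properly terminates if its last configuration has an
empty set of emails. -/
def ProperlyTerminates {Agent Note : Type} [DecidableEq Agent] [DecidableEq Note]
    (s : EState Agent Note) (cs : List (Config Agent Note)) : Prop :=
  ((startConfig s :: cs).getLast (List.cons_ne_nil _ _)).1.emails = ∅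

section Aux
variable {Agent Note : Type}

/-- Size of a message. -/
def Msg.msize : Msg Agent Note → ℕ
  | .send _ _ _ => 1
  | .fwd _ _ m _ => m.msize + 1

lemma Msg.PartOf.size_lt {m' m : Msg Agent Note} (h : Msg.PartOf m' m) :
    m'.msize < m.msize := by
  induction h with
  | base i l m G => simp [Msg.msize]
  | step i l m m' G h ih => simp only [Msg.msize]; omega

lemma Msg.PartOf.irrefl (m : Msg Agent Note) : ¬ Msg.PartOf m m := fun h =>
  absurd h.size_lt (lt_irrefl _)

lemma Msg.PartOf.trans {a b c : Msg Agent Note} (h1 : Msg.PartOf a b)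
    (h2 : Msg.PartOf b c) : Msg.PartOf a c := by
  induction h2 with
  | base i l m G => exact .step i l m a G h1
  | step i l m m' G h ih => exact .step i l m a G (ih h1)

variable [DecidableEq Agent] [DecidableEq Note]

/-- The finset of all parts of a message, including the message itself. -/
def Msg.parts : Msg Agent Note → Finset (Msg Agent Note)
  | .send i l G => {.send i l G}
  | .fwd i l m G => insert (.fwd i l m G) m.parts

lemma Msg.mem_parts {m0 m : Msg Agent Note} :
    m0 ∈ m.parts ↔ m0 = m ∨ Msg.PartOf m0 m := by
  induction m with
  | send i l G =>
    simp only [Msg.parts, Finset.mem_singleton]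
    constructor
    · exact Or.inl
    · rintro (h | h)
      · exact h
      · cases h
  | fwd i l m G ih =>
    simp only [Msg.parts, Finset.mem_insert, ih]
    constructor
    · rintro (h | h | h)
      · exact Or.inl h
      · exact Or.inr (h ▸ .base i l m G)
      · exact Or.inr (.step i l m m0 G h)
    · rintro (h | h)
      · exact Or.inl h
      · cases h with
        | base => exact Or.inr (Or.inl rfl)
        | step _ _ _ _ _ h => exact Or.inr (Or.inr h)

lemma Msg.WF.of_mem_parts {m0 m : Msg Agent Note} (hm : m.WF) (h : m0 ∈ m.parts) :
    m0.WF := by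
  induction m with
  | send i l G => simp only [Msg.parts, Finset.mem_singleton] at h; exact h ▸ hm
  | fwd i l m G ih =>
    simp only [Msg.parts, Finset.mem_insert] at h
    rcases h with h | h
    · exact h ▸ hm
    · exact ih hm.2 h

/-- In a legal state, every part of a message occurring in the state also occurs. -/
lemma part_mem_of_legal {s : EState Agent Note} (hs : s.Legal) :
    ∀ {m' M : Msg Agent Note}, Msg.PartOf m' M →
      ∀ e ∈ s.emails, e.msg = M → ∃ B, (⟨m', B⟩ : Email Agent Note) ∈ s.emails := by
  obtain ⟨_, r, _, _, hL1, _, _⟩ := hs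
  intro m' M h
  induction h with
  | base i l m G =>
    intro e he hmsg
    obtain ⟨e', he', hmsg', _, _⟩ := hL1 e he i l m G hmsg
    obtain ⟨M', B'⟩ := e'
    obtain rfl : M' = m := hmsg'
    exact ⟨B', he'⟩
  | step i l m m'' G h ih =>
    intro e he hmsg
    obtain ⟨e', he', hmsg', _, _⟩ := hL1 e he i l m G hmsg
    exact ih e' he' hmsg'

/-- The counterexample state: the parts of `m`, each with full-complement BCC,
and universal initial notes. -/
noncomputable def cexState [Fintype Agent] (m : Msg Agent Note) : EState Agent Note :=
  ⟨m.parts.image (fun m0 => ⟨m0, (m0.S ∪ m0.recip)ᶜ⟩), fun _ => Set.univ⟩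

lemma cexState_legal [Fintype Agent] {m : Msg Agent Note} (hm : m.WF) :
    (cexState m).Legal := by
  constructor
  · constructor
    · intro e he
      simp only [cexState, Finset.mem_image] at he
      obtain ⟨m0, hm0, rfl⟩ := he
      exact ⟨hm.of_mem_parts hm0, Finset.inter_compl _⟩
    · intro e he e' he' hmsg
      simp only [cexState, Finset.mem_image] at he he'
      obtain ⟨m0, _, rfl⟩ := he
      obtain ⟨m1, _, rfl⟩ := he'
      simp only at hmsg
      subst hmsg; rfl
  · refine ⟨fun e e' => Msg.PartOf e.msg e'.msg, fun e _ => Msg.PartOf.irrefl _,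
      fun _ _ _ _ _ _ h1 h2 => h1.trans h2, ?_, ?_, ?_⟩
    · intro e he i l m0 G hmsg
      simp only [cexState, Finset.mem_image] at he
      obtain ⟨m1, hm1, rfl⟩ := he
      simp only at hmsg
      subst hmsg
      have hm0 : m0 ∈ m.parts := by
        rcases Msg.mem_parts.mp hm1 with h | h
        · exact Msg.mem_parts.mpr (Or.inr (h ▸ .base i l m0 G))
        · exact Msg.mem_parts.mpr (Or.inr ((Msg.PartOf.base i l m0 G).trans h))
      refine ⟨⟨m0, (m0.S ∪ m0.recip)ᶜ⟩, ?_, rfl, .base i l m0 G, ?_⟩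
      · simp only [cexState, Finset.mem_image]; exact ⟨m0, hm0, rfl⟩
      · by_cases hi : i ∈ m0.S ∪ m0.recip
        · rcases Finset.mem_union.mp hi with h | h
          · exact Finset.mem_union.mpr (Or.inl (Finset.mem_union.mpr (Or.inl h)))
          · exact Finset.mem_union.mpr (Or.inl (Finset.mem_union.mpr (Or.inr h)))
        · exact Finset.mem_union.mpr (Or.inr (Finset.mem_compl.mpr hi))
    · intro e _ i l G _ hl
      exact absurd (Set.mem_univ l) hl
    · intro e _ i l m0 G _ hl
      exact absurd (Set.mem_univ l) hl

end Aux

/-- `m → m'` is valid iff `m = m'` or `m'` is part of `m`. -/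
theorem msg_implies_msg_valid_iff {Agent Note : Type} [DecidableEq Agent] [Fintype Agent]
    [Nonempty Agent] [DecidableEq Note] (m m' : Msg Agent Note) (hm : m.WF) (hm' : m'.WF) :
    Valid (Form.imp (.msg m) (.msg m')) ↔ m = m' ∨ Msg.PartOf m' m := by
  constructor
  · intro h
    have hsat := h (cexState m) (cexState_legal hm)
    simp only [Form.imp, Sat, not_and, not_not] at hsat
    have hmem : Sat (cexState m) (.msg m) := by
      refine ⟨(m.S ∪ m.recip)ᶜ, ?_⟩
      simp only [cexState, Finset.mem_image]
      exact ⟨m, Msg.mem_parts.mpr (Or.inl rfl), rfl⟩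
    obtain ⟨B, hB⟩ := hsat hmem
    simp only [cexState, Finset.mem_image] at hB
    obtain ⟨m0, hm0, heq⟩ := hB
    obtain rfl : m0 = m' := congrArg Email.msg heq
    rcases Msg.mem_parts.mp hm0 with rfl | h
    · exact Or.inl rfl
    · exact Or.inr h
  · intro h s hs
    simp only [Form.imp, Sat, not_and, not_not]
    rintro ⟨B, hB⟩
    rcases h with rfl | h
    · exact ⟨B, hB⟩
    · exact part_mem_of_legal hs h ⟨m, B⟩ hB rfl
end

section
/- For every message m, the implication m → C_{S(m)∪R(m)} m is valid, i.e., in every legal state in which m was sent, the group consisting of the sender and the regular recipients of m has common knowledge of m. -/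
/-- `m → C_{S(m) ∪ R(m)} m` is valid. -/
theorem msg_implies_common_knowledge {Agent Note : Type} [DecidableEq Agent] [Fintype Agent]
    [Nonempty Agent] [DecidableEq Note] (m : Msg Agent Note) (hm : m.WF) :
    Valid (Form.imp (.msg m) (.ck (m.S ∪ m.recip) (.msg m))) := by
  intro s _hs
  simp only [Form.imp, Sat]
  rintro ⟨⟨B0, hB0⟩, hnck⟩
  apply hnck
  intro s' _hs' hsim
  have key : ∀ t t' : EState Agent Note, EState.simG (m.S ∪ m.recip) t t' →
      (∃ B, (⟨m, B⟩ : Email Agent Note) ∈ t.emails) →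
      (∃ B, (⟨m, B⟩ : Email Agent Note) ∈ t'.emails) := by
    intro t t' h
    induction h with
    | refl => exact id
    | tail _h step ih =>
      intro hB
      obtain ⟨B, hB⟩ := ih hB
      obtain ⟨i, hiG, hsim'⟩ := step
      have hag : i ∈ (Email.agents (⟨m, B⟩ : Email Agent Note)) := by
        simp only [Email.agents, Finset.mem_union]
        rcases Finset.mem_union.mp hiG with h | h
        · exact Or.inl (Or.inl h)
        · exact Or.inl (Or.inr h)
      obtain ⟨e', he', hsimE⟩ := hsim'.2.1 _ hB hag
      refine ⟨e'.bcc, ?_⟩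
      have : e' = ⟨m, e'.bcc⟩ := by
        cases e' with
        | mk msg bcc => simpa using hsimE.1.symm
      rwa [this] at he'
  exact key s s' hsim ⟨B0, hB0⟩
end

section
/- For every message m, the equivalence m ↔ EI(m) is valid, where EI(m) is the epistemic information contained in m. -/
section Aux
variable {Agent Note : Type} [DecidableEq Agent]

lemma persist {m : Msg Agent Note} {A : Finset Agent}
    (hA : ∀ j ∈ A, j ∈ m.S ∪ m.recip)
    {s s' : EState Agent Note} (h : EState.simG A s s')
    (hm : ∃ B, (⟨m, B⟩ : Email Agent Note) ∈ s.emails) :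
    ∃ B, (⟨m, B⟩ : Email Agent Note) ∈ s'.emails := by
  induction h with
  | refl => exact hm
  | tail hst hstep ih =>
      obtain ⟨B, hB⟩ := ih
      obtain ⟨j, hj, hsim⟩ := hstep
      have hjag : j ∈ (⟨m, B⟩ : Email Agent Note).agents :=
        Finset.mem_union_left _ (hA j hj)
      obtain ⟨e', he', hsim'⟩ := hsim.2.1 ⟨m, B⟩ hB hjag
      refine ⟨e'.bcc, ?_⟩
      have : e' = ⟨m, e'.bcc⟩ := by
        cases e'; cases hsim'.1; rfl
      rwa [this] at he'

lemma EIF_of_mem : ∀ m : Msg Agent Note, ∀ s : EState Agent Note, s.Legal →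
    (∃ B, (⟨m, B⟩ : Email Agent Note) ∈ s.emails) → Sat s m.EIF := by
  intro m
  induction m with
  | send i l G =>
      intro s _ hmem s' hleg' hsim
      have hA : ∀ j ∈ ({i} ∪ G : Finset Agent),
          j ∈ (Msg.send i l G : Msg Agent Note).S ∪ (Msg.send i l G).recip := by
        intro j hj; exact hj
      exact persist hA hsim hmem
  | fwd i l m' G ih =>
      intro s _ hmem s' hleg' hsim
      have hA : ∀ j ∈ ({i} ∪ G : Finset Agent),
          j ∈ (Msg.fwd i l m' G : Msg Agent Note).S ∪ (Msg.fwd i l m' G).recip := by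
        intro j hj; exact hj
      have hfwd := persist hA hsim hmem
      refine ⟨hfwd, ?_⟩
      -- use L1 to get m' in s'
      obtain ⟨B, hB⟩ := hfwd
      obtain ⟨_, r, _, _, hL1, _, _⟩ := id hleg'
      obtain ⟨e', he', hmsg, _, _⟩ := hL1 ⟨Msg.fwd i l m' G, B⟩ hB i l m' G rfl
      have : (⟨m', e'.bcc⟩ : Email Agent Note) ∈ s'.emails := by
        have : e' = ⟨m', e'.bcc⟩ := by cases e'; cases hmsg; rfl
        rwa [this] at he'
      exact ih s' hleg' ⟨e'.bcc, this⟩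

lemma msg_of_EIF (m : Msg Agent Note) (s : EState Agent Note) (hleg : s.Legal)
    (h : Sat s m.EIF) : Sat s (.msg m) := by
  cases m with
  | send i l G => exact h s hleg Relation.ReflTransGen.refl
  | fwd i l m' G => exact (h s hleg Relation.ReflTransGen.refl).1

end Aux

/-- the equivalence `m ↔ EI(m)` is valid. -/
theorem msg_iff_epistemic_information {Agent Note : Type} [DecidableEq Agent] [Fintype Agent]
    [Nonempty Agent] [DecidableEq Note] (m : Msg Agent Note) (hm : m.WF) :
    Valid (Form.iff (.msg m) m.EIF) := by
  intro s hleg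
  constructor
  · rintro ⟨hmsg, hnot⟩
    exact hnot (EIF_of_mem m s hleg hmsg)
  · rintro ⟨hEIF, hnot⟩
    exact hnot (msg_of_EIF m s hleg hEIF)
end

section
/- For every email m_B, the implication m_B → C_{S(m)} m_B is valid (the sender of an email knows the precise set of its BCC recipients), where m_B denotes the formula m ∧ ⋀_{j∈S(m)∪R(m)∪B} j◁m ∧ ⋀_{j∉S(m)∪R(m)∪B} ¬j◁m. -/
lemma bigAnd_sat {Agent Note : Type} [DecidableEq Agent] {α : Type}
    (s : EState Agent Note) (f : α → Form Agent Note) (l : List α) :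
    Sat s (Form.bigAnd (l.map f)) ↔ ∀ x ∈ l, Sat s (f x) := by
  induction l with
  | nil => simp [Form.bigAnd, Sat]
  | cons a t ih => simp [Form.bigAnd, Sat, ih]

/-- The key invariant: the state contains the email `⟨m, B⟩` and every copy of
the message `m` in the state has BCC set exactly `B`. -/
def Einv {Agent Note : Type} (e : Email Agent Note) (t : EState Agent Note) : Prop :=
  e ∈ t.emails ∧ ∀ B, (⟨e.msg, B⟩ : Email Agent Note) ∈ t.emails → B = e.bcc

lemma sender_mem_S {Agent Note : Type} [DecidableEq Agent] (m : Msg Agent Note) :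
    m.sender ∈ m.S := Finset.mem_singleton.mpr rfl

lemma sender_not_bcc {Agent Note : Type} [DecidableEq Agent]
    {e : Email Agent Note} (he : e.WF) : e.msg.sender ∉ e.bcc := fun h =>
  Finset.eq_empty_iff_forall_notMem.mp he.2 e.msg.sender
    (Finset.mem_inter.mpr ⟨Finset.mem_union_left _ (sender_mem_S _), h⟩)

lemma Einv_sat {Agent Note : Type} [DecidableEq Agent] [Fintype Agent]
    {e : Email Agent Note} {t : EState Agent Note} (h : Einv e t) :
    Sat t e.form := by
  obtain ⟨h1, h2⟩ := h
  rw [Email.form]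
  refine ⟨⟨e.bcc, h1⟩, ?_, ?_⟩
  · rw [show (Sat t _) = _ from rfl, bigAnd_sat]
    intro j hj
    exact ⟨e.bcc, h1, Finset.mem_toList.mp hj⟩
  · rw [show (Sat t _) = _ from rfl, bigAnd_sat]
    intro j hj
    rintro ⟨B, hB, hjB⟩
    have : B = e.bcc := h2 B hB
    subst this
    exact Finset.mem_compl.mp (Finset.mem_toList.mp hj) hjB

lemma Einv_of_sat {Agent Note : Type} [DecidableEq Agent] [Fintype Agent]
    {e : Email Agent Note} (he : e.WF) {s : EState Agent Note} (hs : s.Legal)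
    (h : Sat s e.form) : Einv e s := by
  rw [Email.form] at h
  obtain ⟨⟨B, hB⟩, hpos, hneg⟩ := h
  rw [show (Sat s _) = _ from rfl, bigAnd_sat] at hpos
  rw [show (Sat s _) = _ from rfl, bigAnd_sat] at hneg
  have uniq : ∀ B', (⟨e.msg, B'⟩ : Email Agent Note) ∈ s.emails → B' = B := by
    intro B' hB'
    have := hs.1.2 _ hB' _ hB rfl
    exact congrArg Email.bcc this
  have hBwf : (⟨e.msg, B⟩ : Email Agent Note).WF := hs.1.1 _ hB
  have hBe : B = e.bcc := by
    ext j
    constructor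
    · intro hj
      have hjrec : Sat s (.recv j e.msg) := ⟨B, hB, Finset.mem_union_right _ hj⟩
      have hja : j ∈ e.agents := by
        by_contra hna
        exact hneg j (Finset.mem_toList.mpr (Finset.mem_compl.mpr hna)) hjrec
      have hjn : j ∉ e.msg.S ∪ e.msg.recip := fun hin =>
        Finset.eq_empty_iff_forall_notMem.mp hBwf.2 j (Finset.mem_inter.mpr ⟨hin, hj⟩)
      rcases Finset.mem_union.mp hja with hja' | hja'
      · exact absurd hja' hjn
      · exact hja'
    · intro hj
      have hja : j ∈ e.agents := Finset.mem_union_right _ hj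
      obtain ⟨B', hB', hjB'⟩ := hpos j (Finset.mem_toList.mpr hja)
      have : B' = B := uniq B' hB'
      subst this
      have hjn : j ∉ e.msg.S ∪ e.msg.recip := fun hin =>
        Finset.eq_empty_iff_forall_notMem.mp he.2 j (Finset.mem_inter.mpr ⟨hin, hj⟩)
      rcases Finset.mem_union.mp hjB' with hjB'' | hjB''
      · exact absurd hjB'' hjn
      · exact hjB''
  subst hBe
  exact ⟨hB, uniq⟩

lemma Einv_step {Agent Note : Type} [DecidableEq Agent]
    {e : Email Agent Note} (he : e.WF) {t t' : EState Agent Note}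
    (h : Einv e t) (hsim : t.sim e.msg.sender t') : Einv e t' := by
  obtain ⟨h1, h2⟩ := h
  have hsnb := sender_not_bcc he
  constructor
  · obtain ⟨e', he', hse⟩ := hsim.2.1 e h1
      (Finset.mem_union_left _ (Finset.mem_union_left _ (sender_mem_S _)))
    obtain ⟨hmsg, hcase⟩ := hse
    rcases hcase with ⟨_, hbcc⟩ | hrec | hbb
    · have heq : e' = e := by
        obtain ⟨m1, b1⟩ := e; obtain ⟨m2, b2⟩ := e'
        have hm : m1 = m2 := hmsg
        have hb : b1 = b2 := hbcc
        subst hm; subst hb; rfl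
      rwa [← heq]
    · exact absurd (sender_mem_S e.msg) (Finset.mem_sdiff.mp hrec).2
    · exact absurd (Finset.mem_inter.mp hbb).1 hsnb
  · intro B hB
    obtain ⟨e0, he0, hse⟩ := hsim.2.2 ⟨e.msg, B⟩ hB
      (Finset.mem_union_left _ (Finset.mem_union_left _ (sender_mem_S _)))
    obtain ⟨hmsg, hcase⟩ := hse
    have he0b : e0.bcc = e.bcc := by
      have he0eq : e0 = ⟨e.msg, e0.bcc⟩ := by rw [← hmsg]
      exact h2 _ (he0eq ▸ he0)
    rcases hcase with ⟨_, hbcc⟩ | hrec | hbb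
    · exact hbcc.symm.trans he0b
    · exfalso
      rw [hmsg] at hrec
      exact (Finset.mem_sdiff.mp hrec).2 (sender_mem_S _)
    · exact absurd (he0b ▸ (Finset.mem_inter.mp hbb).1) hsnb

/-- for every email `m_B`, the implication `m_B → C_{S(m)} m_B` is valid. -/
theorem email_implies_sender_knows {Agent Note : Type} [DecidableEq Agent] [Fintype Agent]
    [Nonempty Agent] [DecidableEq Note] (e : Email Agent Note) (he : e.WF) :
    Valid (Form.imp e.form (.ck e.msg.S e.form)) := by
  intro s hs
  rw [Form.imp]
  show ¬ (Sat s e.form ∧ ¬ Sat s (.ck e.msg.S e.form))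
  rintro ⟨hform, hnck⟩
  apply hnck
  intro s' hleg hsim
  clear hleg
  have h0 : Einv e s := Einv_of_sat he hs hform
  have hP : Einv e s' := by
    induction hsim with
    | refl => exact h0
    | tail hab hbc ih =>
      obtain ⟨i, hi, hsimi⟩ := hbc
      have : i = e.msg.sender := Finset.mem_singleton.mp hi
      subst this
      exact Einv_step he ih hsimi
  exact Einv_sat hP
end

section
/- Let s = (E,L) be a legal state and A a group of agents. Then there exists a tuple L' of sets of notes such that the state s' = ((E_A)_≤, L') is legal and s ~_A s'. -/
section AuxProof

variable {Agent Note : Type} [DecidableEq Agent] [DecidableEq Note]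

private def Msg.depth : Msg Agent Note → Nat
  | .send _ _ _ => 0
  | .fwd _ _ m _ => m.depth + 1

private lemma ne_fwd (i : Agent) (l : Note) (m : Msg Agent Note) (G : Finset Agent) :
    m ≠ Msg.fwd i l m G := by
  intro h
  have := congrArg Msg.depth h
  simp [Msg.depth] at this

private lemma valid_fwd (i : Agent) (l : Note) (m : Msg Agent Note) (G : Finset Agent) :
    Valid (Form.imp (.msg (Msg.fwd i l m G)) (.msg m)) := by
  intro t ht
  simp only [Form.imp, Sat, not_and, not_not]
  rintro ⟨B, hB⟩
  obtain ⟨_, r, _, _, h1, _, _⟩ := ht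
  obtain ⟨e', he', hm, _, _⟩ := h1 ⟨_, B⟩ hB i l m G rfl
  exact ⟨e'.bcc, by cases e'; cases hm; exact he'⟩

private lemma valid_imp_trans {φ ψ χ : Form Agent Note}
    (h1 : Valid (Form.imp φ ψ)) (h2 : Valid (Form.imp ψ χ)) : Valid (Form.imp φ χ) := by
  intro t ht
  have a := h1 t ht
  have b := h2 t ht
  simp only [Form.imp, Sat, not_and, not_not] at *
  exact fun h => b (a h)

private lemma sharedSet_subset (E : Finset (Email Agent Note)) (A : Finset Agent) :
    sharedSet E A ⊆ E := by
  intro e he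
  simp only [sharedSet, Finset.mem_filter] at he
  exact he.1

private lemma mem_sharedSet {E : Finset (Email Agent Note)} {A : Finset Agent}
    {e : Email Agent Note} : e ∈ sharedSet E A ↔ e ∈ E ∧ e.SharedBy A := by
  simp only [sharedSet, Finset.mem_filter]

private lemma mem_downClosure {E E' : Finset (Email Agent Note)} {e : Email Agent Note} :
    e ∈ downClosure E E' ↔ e ∈ E' ∨ (e ∈ E ∧ ∃ e' ∈ E', emailLt e e') := by
  simp only [downClosure, Finset.mem_union, Finset.mem_filter]

private lemma down_subset (E E' : Finset (Email Agent Note)) (h : E' ⊆ E) :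
    downClosure E E' ⊆ E := by
  intro x hx
  rcases mem_downClosure.1 hx with hx | hx
  · exact h hx
  · exact hx.1

private lemma mem_down {s : EState Agent Note} (A : Finset Agent)
    (huniq : ∀ e ∈ s.emails, ∀ e' ∈ s.emails, e.msg = e'.msg → e = e')
    {e e' : Email Agent Note}
    (he : e ∈ downClosure s.emails (sharedSet s.emails A))
    (he' : e' ∈ s.emails) (hlt : emailLt e' e) :
    e' ∈ downClosure s.emails (sharedSet s.emails A) := by
  rcases mem_downClosure.1 he with h | ⟨hE, e3, he3, hlt2⟩
  · exact mem_downClosure.2 (Or.inr ⟨he', e, h, hlt⟩)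
  · by_cases hm : e'.msg = e3.msg
    · have : e' = e3 := huniq e' he' e3 (sharedSet_subset _ _ he3) hm
      exact mem_downClosure.2 (Or.inl (this ▸ he3))
    · exact mem_downClosure.2 (Or.inr ⟨he', e3, he3, hm, valid_imp_trans hlt2.2 hlt.2⟩)

private lemma legal_down (s : EState Agent Note) (hs : s.Legal) (A : Finset Agent)
    (notes' : Agent → Set Note)
    (hmono : ∀ i, s.notes i ⊆ notes' i)
    (hext : ∀ i l e, e ∈ s.emails → e ∉ downClosure s.emails (sharedSet s.emails A) →
      i ∈ e.msg.recip ∪ e.bcc → l ∈ e.msg.FI → l ∈ notes' i) :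
    (EState.mk (downClosure s.emails (sharedSet s.emails A)) notes').Legal := by
  have hsubE : downClosure s.emails (sharedSet s.emails A) ⊆ s.emails :=
    down_subset _ _ (sharedSet_subset _ _)
  obtain ⟨⟨hwf1, hwf2⟩, r, hirr, htr, h1, h2, h3⟩ := hs
  refine ⟨⟨fun e he => hwf1 e (hsubE he),
    fun e he e' he' => hwf2 e (hsubE he) e' (hsubE he')⟩, r,
    fun e he => hirr e (hsubE he),
    fun e he e' he' e'' he'' => htr e (hsubE he) e' (hsubE he') e'' (hsubE he''),
    ?_, ?_, ?_⟩
  · intro e he i l m G hm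
    obtain ⟨e', he', hm', hr, hi⟩ := h1 e (hsubE he) i l m G hm
    have hlt : emailLt e' e := by
      refine ⟨by rw [hm', hm]; exact ne_fwd i l m G, ?_⟩
      rw [hm, hm']; exact valid_fwd i l m G
    exact ⟨e', mem_down A hwf2 he he' hlt, hm', hr, hi⟩
  · intro e he i l G hm hl
    obtain ⟨e', he', hr, hi, hfi⟩ := h2 e (hsubE he) i l G hm (fun h => hl (hmono i h))
    by_cases hE : e' ∈ downClosure s.emails (sharedSet s.emails A)
    · exact ⟨e', hE, hr, hi, hfi⟩
    · exact absurd (hext i l e' he' hE hi hfi) hl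
  · intro e he i l m G hm hl
    obtain ⟨e', he', hr, hi, hfi⟩ := h3 e (hsubE he) i l m G hm (fun h => hl (hmono i h))
    by_cases hE : e' ∈ downClosure s.emails (sharedSet s.emails A)
    · exact ⟨e', hE, hr, hi, hfi⟩
    · exact absurd (hext i l e' he' hE hi hfi) hl

private lemma Email.sim_self {i : Agent} {e : Email Agent Note} (h : i ∈ e.agents) :
    e.sim i e := by
  refine ⟨rfl, ?_⟩
  simp only [Email.agents, Finset.mem_union] at h
  by_cases hb : i ∈ e.bcc
  · exact Or.inr (Or.inr (Finset.mem_inter.2 ⟨hb, hb⟩))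
  by_cases hS : i ∈ e.msg.S
  · exact Or.inl ⟨hS, rfl⟩
  · have hr : i ∈ e.msg.recip := by tauto
    exact Or.inr (Or.inl (Finset.mem_sdiff.2 ⟨hr, hS⟩))

/-- The intermediate state in the chain: downclosure ∪ remaining emails, with
notes augmented by the factual information of already-deleted emails. -/
private def stT (s : EState Agent Note) (E'' T : Finset (Email Agent Note)) :
    EState Agent Note :=
  ⟨E'' ∪ T, fun i => s.notes i ∪
    {l | ∃ e' ∈ s.emails, e' ∉ E'' ∧ e' ∉ T ∧ i ∈ e'.msg.recip ∪ e'.bcc ∧ l ∈ e'.msg.FI}⟩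

private lemma stT_notes_eq (s : EState Agent Note) (E'' T : Finset (Email Agent Note))
    (e : Email Agent Note) (k : Agent) (hk : k ∉ e.msg.recip ∪ e.bcc) :
    (stT s E'' (insert e T)).notes k = (stT s E'' T).notes k := by
  simp only [stT]
  congr 1
  ext l
  constructor
  · rintro ⟨e', h1, h2, h3, h4, h5⟩
    exact ⟨e', h1, h2, fun h => h3 (Finset.mem_insert_of_mem h), h4, h5⟩
  · rintro ⟨e', h1, h2, h3, h4, h5⟩
    refine ⟨e', h1, h2, ?_, h4, h5⟩
    intro h
    rcases Finset.mem_insert.1 h with rfl | h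
    · exact hk h4
    · exact h3 h

private lemma chain_lemma (s : EState Agent Note) (A : Finset Agent)
    (E'' : Finset (Email Agent Note)) (hsh : sharedSet s.emails A ⊆ E'') :
    ∀ T : Finset (Email Agent Note), T ⊆ s.emails \ E'' →
      EState.simG A (stT s E'' T) (stT s E'' (∅ : Finset (Email Agent Note))) := by
  intro T
  induction T using Finset.induction_on with
  | empty => intro _; exact Relation.ReflTransGen.refl
  | @insert e T hnot ih =>
    intro hsub
    have heD : e ∈ s.emails \ E'' := hsub (Finset.mem_insert_self _ _)
    have heE : e ∈ s.emails := (Finset.mem_sdiff.1 heD).1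
    have heE'' : e ∉ E'' := (Finset.mem_sdiff.1 heD).2
    have hTsub : T ⊆ s.emails \ E'' := fun x hx => hsub (Finset.mem_insert_of_mem hx)
    have step : EState.simG A (stT s E'' (insert e T)) (stT s E'' T) := by
      by_cases hk : ∃ k ∈ A, k ∉ e.agents
      · obtain ⟨k, hkA, hke⟩ := hk
        refine Relation.ReflTransGen.single ⟨k, hkA, ?_, ?_, ?_⟩
        · exact stT_notes_eq s E'' T e k (fun h => hke (by
            simp only [Email.agents, Finset.mem_union] at *; tauto))
        · intro x hx hkx
          refine ⟨x, ?_, Email.sim_self hkx⟩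
          simp only [stT, Finset.mem_union, Finset.mem_insert] at hx ⊢
          rcases hx with h | h
          · exact Or.inl h
          · rcases h with rfl | h
            · exact absurd hkx hke
            · exact Or.inr h
        · intro x hx hkx
          refine ⟨x, ?_, Email.sim_self hkx⟩
          simp only [stT, Finset.mem_union, Finset.mem_insert] at hx ⊢
          tauto
      · push_neg at hk
        have hnsh : ¬ Email.SharedBy A e := by
          intro h
          exact heE'' (hsh (mem_sharedSet.2 ⟨heE, h⟩))
        rw [Email.SharedBy] at hnsh
        push_neg at hnsh
        obtain ⟨hns1, hns2⟩ := hnsh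
        obtain ⟨a, haA, haSR⟩ := Finset.not_subset.1 hns1
        have habcc : a ∈ e.bcc := by
          have h1 := hk a haA
          simp only [Email.agents, Finset.mem_union] at h1
          simp only [Finset.mem_union] at haSR
          push_neg at haSR
          tauto
        obtain ⟨b, hbA, hbS⟩ := Finset.not_subset.1 (hns2 a habcc)
        have hbe : b ∈ e.msg.recip ∪ e.bcc := by
          have := hk b hbA
          simp only [Email.agents, Finset.mem_union] at this ⊢
          simp only [Finset.mem_union, Finset.mem_singleton] at hbS
          tauto
        have hab : a ≠ b := by
          intro h
          exact hbS (Finset.mem_union_right _ (Finset.mem_singleton.2 h.symm))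
        set c : Email Agent Note := ⟨e.msg, e.bcc ∩ {b}⟩ with hc
        set mid : EState Agent Note :=
          ⟨insert c (E'' ∪ T), fun i => if i = b then (stT s E'' (insert e T)).notes i
            else (stT s E'' T).notes i⟩ with hmid
        have hsimbc : Email.sim b e c := by
          refine ⟨rfl, ?_⟩
          rcases Finset.mem_union.1 hbe with hbr | hbb
          · refine Or.inr (Or.inl (Finset.mem_sdiff.2 ⟨hbr, ?_⟩))
            intro h
            exact hbS (Finset.mem_union_left _ h)
          · refine Or.inr (Or.inr (Finset.mem_inter.2 ⟨hbb, ?_⟩))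
            exact Finset.mem_inter.2 ⟨hbb, Finset.mem_singleton_self b⟩
        have hanc : a ∉ c.agents := by
          simp only [hc, Email.agents, Finset.mem_union, Finset.mem_inter,
            Finset.mem_singleton]
          push_neg
          simp only [Finset.mem_union] at haSR
          push_neg at haSR
          exact ⟨⟨haSR.1, haSR.2⟩, fun _ => hab⟩
        have step1 : (stT s E'' (insert e T)).sim b mid := by
          refine ⟨by simp [hmid], ?_, ?_⟩
          · intro x hx hbx
            simp only [stT, Finset.mem_union, Finset.mem_insert] at hx
            rcases hx with h | rfl | h
            · exact ⟨x, by simp [hmid, Finset.mem_insert, Finset.mem_union]; tauto,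
                Email.sim_self hbx⟩
            · exact ⟨c, by simp [hmid], hsimbc⟩
            · exact ⟨x, by simp [hmid, Finset.mem_insert, Finset.mem_union]; tauto,
                Email.sim_self hbx⟩
          · intro x hx hbx
            simp only [hmid, Finset.mem_insert, Finset.mem_union] at hx
            rcases hx with rfl | h | h
            · exact ⟨e, by simp [stT, Finset.mem_union, Finset.mem_insert], hsimbc⟩
            · exact ⟨x, by simp [stT, Finset.mem_union, Finset.mem_insert]; tauto,
                Email.sim_self hbx⟩
            · exact ⟨x, by simp [stT, Finset.mem_union, Finset.mem_insert]; tauto,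
                Email.sim_self hbx⟩
        have step2 : mid.sim a (stT s E'' T) := by
          refine ⟨by simp [hmid, hab], ?_, ?_⟩
          · intro x hx hax
            simp only [hmid, Finset.mem_insert, Finset.mem_union] at hx
            rcases hx with rfl | h | h
            · exact absurd hax hanc
            · exact ⟨x, Finset.mem_union_left _ h, Email.sim_self hax⟩
            · exact ⟨x, Finset.mem_union_right _ h, Email.sim_self hax⟩
          · intro x hx hax
            refine ⟨x, ?_, Email.sim_self hax⟩
            simp only [hmid, Finset.mem_insert, Finset.mem_union]
            simp only [stT, Finset.mem_union] at hx
            tauto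
        exact Relation.ReflTransGen.head ⟨b, hbA, step1⟩
          (Relation.ReflTransGen.single ⟨a, haA, step2⟩)
    exact Relation.ReflTransGen.trans step (ih hTsub)

end AuxProof

/-- for every legal state `s = (E, L)` and group `A` there is `L'`
with `((E_A)_≤, L')` legal and `s ~_A ((E_A)_≤, L')`. -/
theorem shared_downclosure_indistinguishable {Agent Note : Type} [DecidableEq Agent]
    [Fintype Agent] [Nonempty Agent] [DecidableEq Note] (s : EState Agent Note)
    (hs : s.Legal) (A : Finset Agent) :
    ∃ notes' : Agent → Set Note,
      (EState.mk (downClosure s.emails (sharedSet s.emails A)) notes').Legal ∧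
      EState.simG A s (EState.mk (downClosure s.emails (sharedSet s.emails A)) notes') := by
  classical
  set E'' := downClosure s.emails (sharedSet s.emails A) with hE''
  have hsubE : E'' ⊆ s.emails := down_subset _ _ (sharedSet_subset _ _)
  refine ⟨(stT s E'' (∅ : Finset (Email Agent Note))).notes, ?_, ?_⟩
  · apply legal_down s hs A
    · intro i
      exact Set.subset_union_left
    · intro i l e he hne hi hl
      exact Or.inr ⟨e, he, hne, Finset.notMem_empty e, hi, hl⟩
  · have h2 : (EState.mk E'' ((stT s E'' (∅ : Finset (Email Agent Note))).notes)) =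
        stT s E'' (∅ : Finset (Email Agent Note)) := by
      simp [stT]
    have h1 : s = stT s E'' (s.emails \ E'') := by
      cases s with
      | mk E L =>
        simp only [stT]
        congr 1
        · exact (Finset.union_sdiff_of_subset hsubE).symm
        · funext i
          ext l
          simp only [Set.mem_union, Set.mem_setOf_eq, Finset.mem_sdiff]
          constructor
          · exact Or.inl
          · rintro (h | ⟨e', h1', h2', h3', _, _⟩)
            · exact h
            · exact absurd ⟨h1', h2'⟩ h3'
    have hsh : sharedSet s.emails A ⊆ E'' := by
      rw [hE'']
      simp only [downClosure]
      exact Finset.subset_union_left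
    have hc := chain_lemma s A E'' hsh (s.emails \ E'') (Finset.Subset.refl _)
    rw [← h1] at hc
    rw [h2]
    exact hc
end

section
/- Let s = (E,L) be a legal state, A a group of agents with |A| ≥ 3, and m_B an email. Then s ⊨ C_A m_B (with m_B interpreted as its defining formula) if and only if the following three conditions hold: (C1) Ag = S(m) ∪ R(m) ∪ B; (C2) for each i ∈ B there exists m'_{B'} ∈ E_A such that m' → i◁m is valid; (C3) there exists m'_{B'} ∈ E_A such that m' → m is valid. -/
/-!
For `|A| ≥ 3` an email is shared by `A` only if every member of `A` is its sender or a regular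
recipient, so its message survives every `~_A`-step. Hence if shared emails imply `m` and each
`i ◁ m` with `i ∈ B`, every legal state `A`-reachable from `s` contains `m` with a BCC set
containing `B`, and C1 leaves no room for more.

Conversely, `s ⊨ C_A m_B` means that `m_B` lies in every legal state `A`-reachable from `s`.
An email not shared by `A` can be deleted without `A` noticing, and deleting all emails of `s`
that imply a given formula keeps the state legal, because forwards of such emails imply it too.
If C3 fails this deletes `m_B` itself. If C1 or C2 fails, one can then add, respectively remove,
a single BCC recipient of `m_B`, unnoticed by a third member of `A`.
-/

namespace Finset
variable {α : Type} [DecidableEq α]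

theorem exists_mem_ne_ne {A : Finset α} (hA : 3 ≤ A.card) (a b : α) :
    ∃ k ∈ A, k ≠ a ∧ k ≠ b := by
  obtain ⟨k, hk, hkb⟩ :=
    (A.erase a).exists_mem_ne (by rw [card_erase_eq_ite]; split_ifs <;> omega) b
  exact ⟨k, mem_of_mem_erase hk, ne_of_mem_erase hk, hkb⟩

end Finset

namespace Email
variable {Agent Note : Type} [DecidableEq Agent]

theorem mem_agents {e : Email Agent Note} {i : Agent} :
    i ∈ e.agents ↔ i ∈ e.msg.S ∪ e.msg.recip ∨ i ∈ e.bcc :=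
  Finset.mem_union

theorem sim_refl {e : Email Agent Note} {i : Agent} (h : i ∈ e.agents) : e.sim i e := by
  refine ⟨rfl, ?_⟩
  by_cases hS : i ∈ e.msg.S
  · exact .inl ⟨hS, rfl⟩
  · simp_all [mem_agents]

/-- Changing the BCC set of `e` is invisible to an agent other than the sender whose own
BCC status is unchanged. -/
theorem sim_withBcc {e : Email Agent Note} {k : Agent} {C : Finset Agent} (hk : k ∉ e.msg.S)
    (hkC : k ∈ e.bcc ↔ k ∈ C) (h : k ∈ e.agents) : e.sim k ⟨e.msg, C⟩ := by
  refine ⟨rfl, .inr ?_⟩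
  simp_all [mem_agents]

theorem eq_of_agents_eq {e e' : Email Agent Note} (he : e.WF) (he' : e'.WF)
    (hmsg : e.msg = e'.msg) (h : e.agents = e'.agents) : e = e' := by
  have hbcc : e.bcc = e'.bcc := calc
    e.bcc = e.agents \ (e.msg.S ∪ e.msg.recip) :=
      (Finset.union_sdiff_cancel_left (Finset.disjoint_iff_inter_eq_empty.2 he.2)).symm
    _ = e'.agents \ (e'.msg.S ∪ e'.msg.recip) := by rw [h, hmsg]
    _ = e'.bcc := Finset.union_sdiff_cancel_left (Finset.disjoint_iff_inter_eq_empty.2 he'.2)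
  cases e; cases e'; cases hmsg; cases hbcc; rfl

theorem SharedBy.subset_S_union_recip {A : Finset Agent} (hA : 3 ≤ A.card)
    {e : Email Agent Note} (h : e.SharedBy A) : A ⊆ e.msg.S ∪ e.msg.recip := by
  refine h.resolve_right ?_
  rintro ⟨j, -, hsub⟩
  have := (Finset.card_le_card hsub).trans (Finset.card_union_le _ _)
  simp [Msg.S] at this
  omega

end Email

section Semantics
variable {Agent Note : Type} [DecidableEq Agent]

theorem sat_imp {s : EState Agent Note} {φ ψ : Form Agent Note} :
    Sat s (φ.imp ψ) ↔ (Sat s φ → Sat s ψ) := by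
  simp only [Form.imp, Sat]
  tauto

theorem valid_imp_self (φ : Form Agent Note) : Valid (φ.imp φ) :=
  fun _ _ => sat_imp.2 id

theorem sat_bigAnd {s : EState Agent Note} {L : List (Form Agent Note)} :
    Sat s (Form.bigAnd L) ↔ ∀ φ ∈ L, Sat s φ := by
  induction L with
  | nil => simp [Form.bigAnd, Sat]
  | cons φ L ih => simp [Form.bigAnd, Sat, ih]

theorem sat_msg_of_sat_recv {s : EState Agent Note} {i : Agent} {m : Msg Agent Note}
    (h : Sat s (.recv i m)) : Sat s (.msg m) :=
  let ⟨B, hB, _⟩ := h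
  ⟨B, hB⟩

theorem sat_recv_of_sat_msg {s : EState Agent Note} {i : Agent} {m : Msg Agent Note}
    (h : Sat s (.msg m)) (hi : i ∈ m.S ∪ m.recip) : Sat s (.recv i m) :=
  let ⟨B, hB⟩ := h
  ⟨B, hB, Finset.mem_union_left _ hi⟩

theorem sat_recv_iff_of_mem {s : EState Agent Note} (hs : s.WF) {e : Email Agent Note}
    (he : e ∈ s.emails) {i : Agent} : Sat s (.recv i e.msg) ↔ i ∈ e.agents := by
  refine ⟨fun ⟨B, hB, hi⟩ => ?_, fun hi => ⟨e.bcc, he, hi⟩⟩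
  rwa [← hs.2 _ hB e he rfl]

theorem sat_form [Fintype Agent] {s : EState Agent Note} {e : Email Agent Note} :
    Sat s e.form ↔ Sat s (.msg e.msg) ∧ ∀ i, Sat s (.recv i e.msg) ↔ i ∈ e.agents := by
  simp only [Email.form, Sat, sat_bigAnd, List.forall_mem_map, Finset.mem_toList,
    Finset.mem_compl]
  refine and_congr_right fun _ => ⟨fun ⟨h₁, h₂⟩ i => ⟨fun hi => ?_, h₁ i⟩, fun h => ?_⟩
  · by_contra hi'
    exact h₂ i hi' hi
  · exact ⟨fun i => (h i).2, fun i hi hrecv => hi ((h i).1 hrecv)⟩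

theorem sat_form_iff_mem [Fintype Agent] {s : EState Agent Note} (hs : s.WF)
    {e : Email Agent Note} (he : e.WF) : Sat s e.form ↔ e ∈ s.emails := by
  rw [sat_form]
  refine ⟨fun ⟨⟨B, hB⟩, hrecv⟩ => ?_,
    fun hes => ⟨⟨e.bcc, hes⟩, fun i => sat_recv_iff_of_mem hs hes⟩⟩
  have : (⟨e.msg, B⟩ : Email Agent Note) = e :=
    Email.eq_of_agents_eq (hs.1 _ hB) he rfl
      (Finset.ext fun i => (sat_recv_iff_of_mem hs hB).symm.trans (hrecv i))
  exact this ▸ hB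

theorem EState.Legal.sat_recv_of_sat_fwd {s : EState Agent Note} (hs : s.Legal) {i : Agent}
    {l : Note} {m : Msg Agent Note} {G : Finset Agent} (h : Sat s (.msg (.fwd i l m G))) :
    Sat s (.recv i m) := by
  obtain ⟨B, hB⟩ := h
  obtain ⟨-, r, -, -, hL1, -⟩ := hs
  obtain ⟨e, he, rfl, -, hi⟩ := hL1 _ hB i l _ G rfl
  exact ⟨e.bcc, he, hi⟩

theorem valid_imp_recv_fwd (i : Agent) (l : Note) (m : Msg Agent Note) (G : Finset Agent) :
    Valid (Form.imp (.msg (.fwd i l m G)) (.recv i m)) :=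
  fun _ hs => sat_imp.2 hs.sat_recv_of_sat_fwd

theorem Valid.imp_fwd {m : Msg Agent Note} {φ : Form Agent Note}
    (h : Valid (Form.imp (.msg m) φ)) (i : Agent) (l : Note) (G : Finset Agent) :
    Valid (Form.imp (.msg (.fwd i l m G)) φ) :=
  fun s hs => sat_imp.2 fun hf =>
    sat_imp.1 (h s hs) (sat_msg_of_sat_recv (hs.sat_recv_of_sat_fwd hf))

end Semantics

namespace EState
variable {Agent Note : Type} [DecidableEq Agent]

theorem sim_of_agree {k : Agent} {s t : EState Agent Note} (hL : s.notes k = t.notes k)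
    (h : ∀ f : Email Agent Note, k ∈ f.agents → (f ∈ s.emails ↔ f ∈ t.emails)) : s.sim k t :=
  ⟨hL, fun f hf hk => ⟨f, (h f hk).1 hf, Email.sim_refl hk⟩,
    fun f hf hk => ⟨f, (h f hk).2 hf, Email.sim_refl hk⟩⟩

theorem sat_msg_of_simG {A : Finset Agent} {m : Msg Agent Note} (hA : A ⊆ m.S ∪ m.recip)
    {s t : EState Agent Note} (hst : simG A s t) (h : Sat s (.msg m)) : Sat t (.msg m) := by
  induction hst with
  | refl => exact h
  | tail _ hut ih =>
    obtain ⟨B, hB⟩ := ih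
    obtain ⟨i, hiA, hsim⟩ := hut
    obtain ⟨⟨m', B'⟩, hB', rfl, -⟩ := hsim.2.1 _ hB (Finset.mem_union_left _ (hA hiA))
    exact ⟨B', hB'⟩

theorem sat_of_sharedBy_valid_imp {A : Finset Agent} (hA : 3 ≤ A.card) {s t : EState Agent Note}
    {e : Email Agent Note} (he : e ∈ s.emails) (hsh : e.SharedBy A) {φ : Form Agent Note}
    (hv : Valid (Form.imp (.msg e.msg) φ)) (ht : t.Legal) (hst : simG A s t) : Sat t φ :=
  sat_imp.1 (hv t ht) (sat_msg_of_simG (hsh.subset_S_union_recip hA) hst ⟨e.bcc, he⟩)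

/-- Legality is reflected along a message-preserving injection `ρ` of the emails of `t` into
those of a legal state `s`, provided the witnesses required by L1–L3 in `s` have preimages that
still serve as witnesses in `t`; the order on `t` is pulled back along `ρ`. -/
theorem Legal.of_retract {s t : EState Agent Note} (hs : s.Legal)
    (ρ : Email Agent Note → Email Agent Note)
    (hρ : ∀ f ∈ t.emails, ρ f ∈ s.emails ∧ (ρ f).msg = f.msg)
    (hinj : Set.InjOn ρ t.emails) (hwf : ∀ f ∈ t.emails, f.WF)
    (hnotes : ∀ i, s.notes i ⊆ t.notes i)
    (hfwd : ∀ f ∈ t.emails, ∀ e ∈ s.emails, ∀ (i : Agent) (l : Note) (G : Finset Agent),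
      f.msg = .fwd i l e.msg G → i ∈ e.agents → ∃ e' ∈ t.emails, ρ e' = e ∧ i ∈ e'.agents)
    (hinfo : ∀ e ∈ s.emails, ∀ (i : Agent) (l : Note), i ∈ e.msg.recip ∪ e.bcc →
      l ∈ e.msg.FI → l ∉ t.notes i → ∃ e' ∈ t.emails, ρ e' = e ∧ i ∈ e'.msg.recip ∪ e'.bcc) :
    t.Legal := by
  obtain ⟨⟨-, huniq⟩, r, hirr, htrans, hL1, hL2, hL3⟩ := hs
  have hinfo' : ∀ f ∈ t.emails, ∀ (i : Agent) (l : Note), l ∉ t.notes i →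
      (∃ e ∈ s.emails, r e (ρ f) ∧ i ∈ e.msg.recip ∪ e.bcc ∧ l ∈ e.msg.FI) →
      ∃ e' ∈ t.emails, r (ρ e') (ρ f) ∧ i ∈ e'.msg.recip ∪ e'.bcc ∧ l ∈ e'.msg.FI := by
    rintro f - i l hl ⟨e, he, hr, hi, hFI⟩
    obtain ⟨e', he', rfl, hi'⟩ := hinfo e he i l hi hFI hl
    exact ⟨e', he', hr, hi', (hρ e' he').2 ▸ hFI⟩
  refine ⟨⟨hwf, fun f hf f' hf' hm => hinj hf hf' (huniq _ (hρ f hf).1 _ (hρ f' hf').1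
      (by rw [(hρ f hf).2, (hρ f' hf').2, hm]))⟩,
    fun x y => r (ρ x) (ρ y), fun f hf => hirr _ (hρ f hf).1,
    fun f hf f' hf' f'' hf'' => htrans _ (hρ f hf).1 _ (hρ f' hf').1 _ (hρ f'' hf'').1,
    ?_, ?_, ?_⟩
  · intro f hf i l m G hfm
    obtain ⟨e, he, rfl, hr, hi⟩ := hL1 _ (hρ f hf).1 i l _ G ((hρ f hf).2.trans hfm)
    obtain ⟨e', he', rfl, hi'⟩ := hfwd f hf _ he i l G hfm hi
    rw [(hρ e' he').2]
    exact ⟨e', he', rfl, hr, hi'⟩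
  · intro f hf i l G hfm hl
    exact hinfo' f hf i l hl
      (hL2 _ (hρ f hf).1 i l G ((hρ f hf).2.trans hfm) fun h => hl (hnotes i h))
  · intro f hf i l m G hfm hl
    exact hinfo' f hf i l hl
      (hL3 _ (hρ f hf).1 i l m G ((hρ f hf).2.trans hfm) fun h => hl (hnotes i h))

variable [DecidableEq Note]

theorem sim_shrink {s : EState Agent Note} {e : Email Agent Note} (he : e ∈ s.emails)
    {C : Finset Agent} {k : Agent} (hk : k ∉ e.msg.S) (hkC : k ∈ e.bcc ↔ k ∈ C) :
    s.sim k (s.shrink e C) := by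
  have hag : k ∈ (⟨e.msg, C⟩ : Email Agent Note).agents ↔ k ∈ e.agents := by
    simp only [Email.mem_agents, hkC]
  refine ⟨by simp [shrink, hkC], fun f hf hkf => ?_, fun f hf hkf => ?_⟩
  · by_cases hfe : f = e
    · subst hfe
      exact ⟨_, Finset.mem_insert_self _ _, Email.sim_withBcc hk hkC hkf⟩
    · exact ⟨f, Finset.mem_insert_of_mem (Finset.mem_erase.2 ⟨hfe, hf⟩), Email.sim_refl hkf⟩
  · rcases Finset.mem_insert.1 hf with rfl | hf
    · exact ⟨e, he, Email.sim_withBcc hk hkC (hag.1 hkf)⟩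
    · exact ⟨f, Finset.mem_of_mem_erase hf, Email.sim_refl hkf⟩

theorem not_mem_shrink_emails {s : EState Agent Note} {e : Email Agent Note} {C : Finset Agent}
    (hC : C ≠ e.bcc) : e ∉ (s.shrink e C).emails := by
  simp only [shrink, Finset.mem_insert, Finset.mem_erase, ne_eq, not_true_eq_false, false_and,
    or_false]
  exact fun h => hC (congrArg Email.bcc h).symm

/-- An email that `A` does not share can be removed without `A` noticing: an agent `i ∈ A`
outside `S(m) ∪ R(m)` is not involved once it has been dropped from the BCC list, and the
dropping is invisible to a third member of `A`. -/
theorem simG_remove {A : Finset Agent} (hA : 3 ≤ A.card) {s : EState Agent Note}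
    {e : Email Agent Note} (he : e ∈ s.emails) (hsh : ¬ e.SharedBy A) :
    simG A s (s.remove e) := by
  obtain ⟨i, hiA, hiSR⟩ := Finset.not_subset.1 fun h => hsh (.inl h)
  by_cases hib : i ∈ e.bcc
  · obtain ⟨k, hkA, hks, hki⟩ := A.exists_mem_ne_ne hA e.msg.sender i
    have hshrink : s.sim k (s.shrink e (e.bcc.erase i)) :=
      sim_shrink he (by simpa [Msg.S] using hks) (by simp [hki])
    have hremove : (s.shrink e (e.bcc.erase i)).sim i (s.remove e) := by
      refine sim_of_agree (by simp [shrink, remove, hib]) fun f hif => ?_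
      simp only [shrink, remove, Finset.mem_insert, or_iff_right_iff_imp]
      rintro rfl
      simp [Email.mem_agents, hiSR] at hif
    exact .tail (.single ⟨k, hkA, hshrink⟩) ⟨i, hiA, hremove⟩
  · refine .single ⟨i, hiA, sim_of_agree (by simp_all [remove]) fun f hif => ?_⟩
    simp only [remove, Finset.mem_erase, iff_and_self]
    rintro - rfl
    simp [Email.mem_agents, hiSR, hib] at hif

/-- The state `s \ F` obtained by removing all emails of `F` at once (cf. `EState.remove`). -/
def removeAll (s : EState Agent Note) (F : Finset (Email Agent Note)) : EState Agent Note :=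
  ⟨s.emails \ F, fun j => s.notes j ∪ {l | ∃ f ∈ F, j ∈ f.msg.recip ∪ f.bcc ∧ l ∈ f.msg.FI}⟩

theorem removeAll_empty (s : EState Agent Note) : s.removeAll ∅ = s := by
  simp [removeAll]

theorem removeAll_insert (s : EState Agent Note) (e : Email Agent Note)
    (F : Finset (Email Agent Note)) : s.removeAll (insert e F) = (s.removeAll F).remove e := by
  simp only [removeAll, remove, mk.injEq, Finset.sdiff_insert, true_and]
  funext j
  split_ifs with hj
  · ext l
    simp only [Finset.mem_insert, Set.mem_union, Set.mem_ofPred_eq]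
    constructor
    · rintro (hl | ⟨f, rfl | hf, hjf, hl⟩)
      exacts [.inl (.inl hl), .inr hl, .inl (.inr ⟨f, hf, hjf, hl⟩)]
    · rintro ((hl | ⟨f, hf, hjf, hl⟩) | hl)
      exacts [.inl hl, .inr ⟨f, .inr hf, hjf, hl⟩, .inr ⟨e, .inl rfl, hj, hl⟩]
  · ext l
    simp only [Finset.mem_insert, Set.mem_union, Set.mem_ofPred_eq]
    refine or_congr_right ⟨?_, fun ⟨f, hf, hjf, hl⟩ => ⟨f, .inr hf, hjf, hl⟩⟩
    rintro ⟨f, rfl | hf, hjf, hl⟩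
    exacts [absurd hjf hj, ⟨f, hf, hjf, hl⟩]

theorem simG_removeAll {A : Finset Agent} (hA : 3 ≤ A.card)
    {s : EState Agent Note} {F : Finset (Email Agent Note)}
    (hF : ∀ f ∈ F, f ∈ s.emails ∧ ¬ f.SharedBy A) : simG A s (s.removeAll F) := by
  induction F using Finset.induction_on with
  | empty => rw [removeAll_empty]; exact .refl
  | insert e F heF ih =>
    obtain ⟨hes, hsh⟩ := hF e (Finset.mem_insert_self e F)
    rw [removeAll_insert]
    exact (ih fun f hf => hF f (Finset.mem_insert_of_mem hf)).trans
      (simG_remove hA (Finset.mem_sdiff.2 ⟨hes, heF⟩) hsh)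

theorem Legal.removeAll {s : EState Agent Note} (hs : s.Legal) {F : Finset (Email Agent Note)}
    (hF : ∀ f ∈ s.emails, ∀ e ∈ F, ∀ (i : Agent) (l : Note) (G : Finset Agent),
      f.msg = .fwd i l e.msg G → f ∈ F) :
    (s.removeAll F).Legal := by
  refine hs.of_retract id (fun f hf => ⟨(Finset.mem_sdiff.1 hf).1, rfl⟩) (Set.injOn_id _)
    (fun f hf => hs.1.1 f (Finset.mem_sdiff.1 hf).1) (fun _ => Set.subset_union_left) ?_ ?_
  · intro f hf e he i l G hfm hi
    obtain ⟨hfs, hfF⟩ := Finset.mem_sdiff.1 hf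
    exact ⟨e, Finset.mem_sdiff.2 ⟨he, fun heF => hfF (hF f hfs e heF i l G hfm)⟩, rfl, hi⟩
  · intro e he i l hi hl hnot
    exact ⟨e, Finset.mem_sdiff.2 ⟨he, fun heF => hnot (.inr ⟨e, heF, hi, hl⟩)⟩, rfl, hi⟩

theorem Legal.shrink {s : EState Agent Note} (hs : s.Legal)
    {e : Email Agent Note} (he : e ∈ s.emails) {C : Finset Agent}
    (hC : (e.msg.S ∪ e.msg.recip) ∩ C = ∅)
    (hfwd : ∀ f ∈ s.emails, ∀ (i : Agent) (l : Note) (G : Finset Agent),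
      f.msg = .fwd i l e.msg G → i ∈ e.bcc → i ∈ C) :
    (s.shrink e C).Legal := by
  set e' : Email Agent Note := ⟨e.msg, C⟩
  have hne : ∀ f ∈ s.emails, f ≠ e → f ≠ e' :=
    fun f hf hfe hfe' => hfe (hs.1.2 f hf e he (by rw [hfe']))
  have hmem : ∀ f ∈ (s.shrink e C).emails, f = e' ∨ (f ∈ s.emails ∧ f ≠ e) := fun f hf =>
    (Finset.mem_insert.1 hf).imp_right fun h =>
      ⟨Finset.mem_of_mem_erase h, Finset.ne_of_mem_erase h⟩
  refine hs.of_retract (fun f => if f = e' then e else f) ?_ ?_ ?_ (fun i => ?_) ?_ ?_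
  · intro f hf
    rcases hmem f hf with rfl | ⟨hfs, hfe⟩
    · simp [he, e']
    · simp [hne f hfs hfe, hfs]
  · intro f hf f' hf' h
    rcases hmem f hf with rfl | ⟨hfs, hfe⟩ <;> rcases hmem f' hf' with rfl | ⟨hfs', hfe'⟩ <;>
      simp_all
  · intro f hf
    rcases hmem f hf with rfl | ⟨hfs, -⟩
    exacts [⟨(hs.1.1 e he).1, hC⟩, hs.1.1 f hfs]
  · intro l hl
    simp only [EState.shrink]
    split_ifs
    exacts [.inl hl, hl]
  · intro f hf e₀ he₀ i l G hfm hi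
    by_cases h₀ : e₀ = e
    · subst e₀
      refine ⟨e', Finset.mem_insert_self _ _, if_pos rfl, ?_⟩
      rcases Email.mem_agents.1 hi with hSR | hib
      · exact Email.mem_agents.2 (.inl hSR)
      · obtain ⟨g, hg, hgm⟩ : ∃ g ∈ s.emails, g.msg = f.msg :=
          (hmem f hf).elim (fun h => ⟨e, he, by rw [h]⟩) fun h => ⟨f, h.1, rfl⟩
        exact Email.mem_agents.2 (.inr (hfwd g hg i l G (hgm.trans hfm) hib))
    · exact ⟨e₀, Finset.mem_insert_of_mem (Finset.mem_erase.2 ⟨h₀, he₀⟩),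
        if_neg (hne e₀ he₀ h₀), hi⟩
  · intro e₀ he₀ i l hi hl hnot
    by_cases h₀ : e₀ = e
    · subst e₀
      refine ⟨e', Finset.mem_insert_self _ _, if_pos rfl, ?_⟩
      rcases Finset.mem_union.1 hi with hir | hib
      · exact Finset.mem_union_left _ hir
      · by_contra hiC
        have hiC : i ∉ C := fun h => hiC (Finset.mem_union_right _ h)
        exact hnot (by simp [EState.shrink, hib, hiC, hl])
    · exact ⟨e₀, Finset.mem_insert_of_mem (Finset.mem_erase.2 ⟨h₀, he₀⟩),
        if_neg (hne e₀ he₀ h₀), hi⟩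

end EState

section CommonKnowledge
variable {Agent Note : Type} [DecidableEq Agent] [DecidableEq Note]

theorem EState.Legal.exists_simG_not_mem {A : Finset Agent} (hA : 3 ≤ A.card)
    {s : EState Agent Note} (hs : s.Legal) {e : Email Agent Note} (he : e ∈ s.emails)
    {C : Finset Agent} (j : Agent) (hCj : ∀ k ≠ j, k ∈ e.bcc ↔ k ∈ C) (hCe : C ≠ e.bcc)
    (hC : (e.msg.S ∪ e.msg.recip) ∩ C = ∅)
    (hfwd : ∀ f ∈ s.emails, ∀ (i : Agent) (l : Note) (G : Finset Agent),
      f.msg = .fwd i l e.msg G → i ∈ e.bcc → i ∈ C) :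
    ∃ t : EState Agent Note, t.Legal ∧ EState.simG A s t ∧ e ∉ t.emails := by
  obtain ⟨k, hkA, hks, hkj⟩ := A.exists_mem_ne_ne hA e.msg.sender j
  exact ⟨s.shrink e C, hs.shrink he hC hfwd,
    .single ⟨k, hkA, EState.sim_shrink he (by simpa [Msg.S] using hks) (hCj k hkj)⟩,
    EState.not_mem_shrink_emails hCe⟩

theorem EState.Legal.exists_simG_forall_not_valid_imp {A : Finset Agent} (hA : 3 ≤ A.card)
    {s : EState Agent Note} (hs : s.Legal) (φ : Form Agent Note)
    (hφ : ∀ f ∈ s.emails, f.SharedBy A → ¬ Valid (Form.imp (.msg f.msg) φ)) :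
    ∃ t : EState Agent Note, t.Legal ∧ EState.simG A s t ∧
      ∀ f, f ∈ t.emails ↔ f ∈ s.emails ∧ ¬ Valid (Form.imp (.msg f.msg) φ) := by
  classical
  refine ⟨s.removeAll (s.emails.filter fun f => Valid (Form.imp (.msg f.msg) φ)),
    hs.removeAll ?_, EState.simG_removeAll hA ?_, fun f => ?_⟩
  · intro f hf e he i l G hfm
    rw [Finset.mem_filter] at he ⊢
    exact ⟨hf, hfm ▸ he.2.imp_fwd i l G⟩
  · intro f hf
    rw [Finset.mem_filter] at hf
    exact ⟨hf.1, fun hsh => hφ f hf.1 hsh hf.2⟩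
  · simp only [EState.removeAll, Finset.mem_sdiff, Finset.mem_filter]
    tauto

variable {A : Finset Agent} (hA : 3 ≤ A.card) {s : EState Agent Note}
  (hs : s.Legal) {e : Email Agent Note}
  (hmem : ∀ t : EState Agent Note, t.Legal → EState.simG A s t → e ∈ t.emails)
include hA hs hmem

theorem exists_sharedBy_valid_imp_recv_of_forall_simG_mem {i : Agent} (hi : i ∈ e.bcc) :
    ∃ e' ∈ s.emails, e'.SharedBy A ∧ Valid (Form.imp (.msg e'.msg) (.recv i e.msg)) := by
  by_contra! h
  obtain ⟨t, ht, hst, ht_emails⟩ := hs.exists_simG_forall_not_valid_imp hA _ h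
  have het := hmem t ht hst
  -- a forward of `m` by `i` would imply `i ◁ m`, so `t` has none and `i` can leave the BCC list
  obtain ⟨u, hu, htu, heu⟩ := ht.exists_simG_not_mem hA het (C := e.bcc.erase i) i
    (fun k hk => by simp [hk]) (fun h => Finset.erase_eq_self.1 h hi)
    (Finset.subset_empty.1
      ((ht.1.1 e het).2 ▸ Finset.inter_subset_inter_left (Finset.erase_subset _ _)))
    (fun f hf i' l G hfm hi' => Finset.mem_erase.2 ⟨by
      rintro rfl
      exact ((ht_emails f).1 hf).2 (hfm ▸ valid_imp_recv_fwd i' l e.msg G), hi'⟩)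
  exact heu (hmem u hu (hst.trans htu))

theorem exists_sharedBy_valid_imp_msg_of_forall_simG_mem :
    ∃ e' ∈ s.emails, e'.SharedBy A ∧ Valid (Form.imp (.msg e'.msg) (.msg e.msg)) := by
  by_contra! h
  obtain ⟨t, ht, hst, ht_emails⟩ := hs.exists_simG_forall_not_valid_imp hA _ h
  exact ((ht_emails e).1 (hmem t ht hst)).2 (valid_imp_self _)

theorem agents_eq_univ_of_forall_simG_mem [Fintype Agent] : e.agents = Finset.univ := by
  have hes := hmem s hs .refl
  by_contra hne
  obtain ⟨j, hj⟩ : ∃ j, j ∉ e.agents := by simpa [Finset.eq_univ_iff_forall] using hne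
  have hjSR : j ∉ e.msg.S ∪ e.msg.recip := fun h => hj (Finset.mem_union_left _ h)
  have hjB : j ∉ e.bcc := fun h => hj (Finset.mem_union_right _ h)
  obtain ⟨t, ht, hst, het⟩ := hs.exists_simG_not_mem hA hes (C := insert j e.bcc) j
    (fun k hk => by simp [hk]) (by simpa [Finset.insert_eq_self] using hjB)
    (by rw [Finset.inter_insert_of_notMem hjSR]; exact (hs.1.1 e hes).2)
    (fun _ _ _ _ _ _ hi => Finset.mem_insert_of_mem hi)
  exact het (hmem t ht hst)

end CommonKnowledge

theorem common_knowledge_email_iff_general {Agent Note : Type} [DecidableEq Agent] [Fintype Agent]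
    [DecidableEq Note] (s : EState Agent Note) (hs : s.Legal)
    (A : Finset Agent) (hA : 3 ≤ A.card) (e : Email Agent Note) (he : e.WF) :
    Sat s (.ck A e.form) ↔
      ((Finset.univ : Finset Agent) = e.msg.S ∪ e.msg.recip ∪ e.bcc) ∧
      (∀ i ∈ e.bcc, ∃ e' ∈ s.emails, e'.SharedBy A ∧
        Valid (Form.imp (.msg e'.msg) (.recv i e.msg))) ∧
      (∃ e' ∈ s.emails, e'.SharedBy A ∧ Valid (Form.imp (.msg e'.msg) (.msg e.msg))) := by
  constructor
  · intro h
    have hmem t (ht : EState.Legal t) hst : e ∈ t.emails :=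
      (sat_form_iff_mem ht.1 he).1 (h t ht hst)
    exact ⟨(agents_eq_univ_of_forall_simG_mem hA hs hmem).symm,
      fun i hi => exists_sharedBy_valid_imp_recv_of_forall_simG_mem hA hs hmem hi,
      exists_sharedBy_valid_imp_msg_of_forall_simG_mem hA hs hmem⟩
  · rintro ⟨huniv, hbcc, e₁, he₁, hsh₁, hv₁⟩ t ht hst
    have hmsg : Sat t (.msg e.msg) := EState.sat_of_sharedBy_valid_imp hA he₁ hsh₁ hv₁ ht hst
    have hall : ∀ i, i ∈ e.agents := fun i => by rw [Email.agents, ← huniv]; exact Finset.mem_univ i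
    refine sat_form.2 ⟨hmsg, fun i => iff_of_true ?_ (hall i)⟩
    rcases Email.mem_agents.1 (hall i) with hSR | hB
    · exact sat_recv_of_sat_msg hmsg hSR
    · obtain ⟨e₂, he₂, hsh₂, hv₂⟩ := hbcc i hB
      exact EState.sat_of_sharedBy_valid_imp hA he₂ hsh₂ hv₂ ht hst

/-- for `|A| ≥ 3`, `s ⊨ C_A m_B` iff C1, C2 and C3 hold. -/
theorem common_knowledge_email_iff {Agent Note : Type} [DecidableEq Agent] [Fintype Agent]
    [Nonempty Agent] [DecidableEq Note] (s : EState Agent Note) (hs : s.Legal)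
    (A : Finset Agent) (hA : 3 ≤ A.card) (e : Email Agent Note) (he : e.WF) :
    Sat s (.ck A e.form) ↔
      ((Finset.univ : Finset Agent) = e.msg.S ∪ e.msg.recip ∪ e.bcc) ∧
      (∀ i ∈ e.bcc, ∃ e' ∈ s.emails, e'.SharedBy A ∧
        Valid (Form.imp (.msg e'.msg) (.recv i e.msg))) ∧
      (∃ e' ∈ s.emails, e'.SharedBy A ∧ Valid (Form.imp (.msg e'.msg) (.msg e.msg))) :=
  common_knowledge_email_iff_general s hs A hA e he
end

section
/- Let s = (E,L) be a legal state and m_B ∈ E an email that is a <-maximal element of E (i.e., there is no m'_{B'} ∈ E with m_B < m'_{B'}). Then the state s\m_B is legal. -/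
private lemma msg_ne_fwd' {Agent Note : Type} (i : Agent) (l : Note) (m : Msg Agent Note)
    (G : Finset Agent) : m ≠ Msg.fwd i l m G := by
  intro h
  have h1 : sizeOf m < sizeOf (Msg.fwd i l m G) := by
    simp only [Msg.fwd.sizeOf_spec]; omega
  rw [← h] at h1
  exact lt_irrefl _ h1

private lemma valid_fwd_imp' {Agent Note : Type} [DecidableEq Agent] (i : Agent) (l : Note)
    (m : Msg Agent Note) (G : Finset Agent) :
    Valid (Form.imp (.msg (Msg.fwd i l m G)) (.msg m)) := by
  intro t ht
  simp only [Form.imp, Sat, not_and, not_not]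
  rintro ⟨B, hB⟩
  obtain ⟨_, r, _, _, hL1, _, _⟩ := ht
  obtain ⟨e', he', hmsg, _, _⟩ := hL1 ⟨Msg.fwd i l m G, B⟩ hB i l m G rfl
  refine ⟨e'.bcc, ?_⟩
  have : e' = ⟨m, e'.bcc⟩ := by cases e'; cases hmsg; rfl
  rwa [← this]

/-- removing a `<`-maximal email from a legal state yields a legal state. -/
theorem remove_maximal_legal {Agent Note : Type} [DecidableEq Agent] [Fintype Agent]
    [Nonempty Agent] [DecidableEq Note] (s : EState Agent Note) (hs : s.Legal)
    (e : Email Agent Note) (he : e ∈ s.emails)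
    (hmax : ¬ ∃ e' ∈ s.emails, emailLt e e') :
    (s.remove e).Legal := by
  obtain ⟨⟨hwf1, hwf2⟩, r, hirr, htr, hL1, hL2, hL3⟩ := hs
  have hmem : ∀ {e' : Email Agent Note}, e' ∈ (s.remove e).emails →
      e' ≠ e ∧ e' ∈ s.emails := fun h => Finset.mem_erase.mp h
  have hnotes : ∀ i l, l ∉ (s.remove e).notes i → l ∉ s.notes i := by
    intro i l hl h
    apply hl
    unfold EState.remove
    dsimp only
    split
    · exact Or.inl h
    · exact h
  have hnotes2 : ∀ i l, i ∈ e.msg.recip ∪ e.bcc → l ∈ e.msg.FI →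
      l ∈ (s.remove e).notes i := by
    intro i l hi hl
    unfold EState.remove
    dsimp only
    rw [if_pos hi]
    exact Or.inr hl
  refine ⟨⟨?_, ?_⟩, r, ?_, ?_, ?_, ?_, ?_⟩
  · intro e' h; exact hwf1 e' (hmem h).2
  · intro e' h e'' h'; exact hwf2 e' (hmem h).2 e'' (hmem h').2
  · intro e' h; exact hirr e' (hmem h).2
  · intro a ha b hb c hc; exact htr a (hmem ha).2 b (hmem hb).2 c (hmem hc).2
  · -- L1
    intro e'' h i l m G hmsg
    obtain ⟨hne, hE⟩ := hmem h
    obtain ⟨w, hw, hwm, hr, hi⟩ := hL1 e'' hE i l m G hmsg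
    have hwe : w ≠ e := by
      intro hweq
      apply hmax
      refine ⟨e'', hE, ?_, ?_⟩
      · rw [hweq] at hwm
        rw [hwm, hmsg]
        exact msg_ne_fwd' i l m G
      · rw [hweq] at hwm
        rw [hwm, hmsg]
        exact valid_fwd_imp' i l m G
    exact ⟨w, Finset.mem_erase.mpr ⟨hwe, hw⟩, hwm, hr, hi⟩
  · -- L2
    intro e'' h i l G hmsg hl
    obtain ⟨hne, hE⟩ := hmem h
    obtain ⟨w, hw, hr, hi, hFI⟩ := hL2 e'' hE i l G hmsg (hnotes i l hl)
    have hwe : w ≠ e := by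
      intro hweq
      rw [hweq] at hi hFI
      exact hl (hnotes2 i l hi hFI)
    exact ⟨w, Finset.mem_erase.mpr ⟨hwe, hw⟩, hr, hi, hFI⟩
  · -- L3
    intro e'' h i l m G hmsg hl
    obtain ⟨hne, hE⟩ := hmem h
    obtain ⟨w, hw, hr, hi, hFI⟩ := hL3 e'' hE i l m G hmsg (hnotes i l hl)
    have hwe : w ≠ e := by
      intro hweq
      rw [hweq] at hi hFI
      exact hl (hnotes2 i l hi hFI)
    exact ⟨w, Finset.mem_erase.mpr ⟨hwe, hw⟩, hr, hi, hFI⟩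
end

section
/- Let s = (E,L) be a legal state, m_B ∈ E an email and C ⊆ B, and suppose that E contains no forward of m by an agent in B \ C, i.e., no email of the form f(i,l.m,G)_D ∈ E with i ∈ B \ C. Then the state s[m_{B↦C}] is legal. -/
/-! Shrinking the BCC set of `m_B` to `C` changes the emails only by replacing `m_B` with `m_C`,
so the order witnessing legality of `s` can be pulled back along `m_C ↦ m_B`. The only witnesses
that may break are those where `m_B` serves an agent `i ∈ B \ C` through its BCC field. In L2 and
L3 this cannot happen, since `i` now holds `FI(m)` among its initial notes; in L1, `i` would be
forwarding `m`, which is excluded by hypothesis. -/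

namespace EState

variable {Agent Note : Type} [DecidableEq Agent] [DecidableEq Note]
  {s : EState Agent Note} {e x : Email Agent Note} {C : Finset Agent} {i : Agent}

def toShrink (e : Email Agent Note) (C : Finset Agent) (x : Email Agent Note) :
    Email Agent Note :=
  if x = e then ⟨e.msg, C⟩ else x

def ofShrink (e : Email Agent Note) (C : Finset Agent) (x : Email Agent Note) :
    Email Agent Note :=
  if x = ⟨e.msg, C⟩ then e else x

theorem mem_shrink_emails :
    x ∈ (s.shrink e C).emails ↔ x = ⟨e.msg, C⟩ ∨ x ≠ e ∧ x ∈ s.emails := by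
  simp [shrink]

theorem notes_subset_notes_shrink (i : Agent) : s.notes i ⊆ (s.shrink e C).notes i := by
  intro l hl
  simp only [shrink]
  split_ifs
  exacts [Or.inl hl, hl]

theorem FI_subset_notes_shrink (hi : i ∈ e.bcc \ C) : e.msg.FI ⊆ (s.shrink e C).notes i := by
  intro l hl
  simp only [shrink, if_pos hi]
  exact Or.inr hl

theorem WF.shrink (hs : s.WF) (he : e ∈ s.emails) (hC : C ⊆ e.bcc) : (s.shrink e C).WF := by
  have hne : ∀ y ∈ s.emails, y ≠ e → y.msg ≠ e.msg := fun y hy hye hmsg =>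
    hye (hs.2 y hy e he hmsg)
  refine ⟨fun y hy => ?_, fun y hy z hz hyz => ?_⟩
  · rcases mem_shrink_emails.1 hy with rfl | ⟨-, hy⟩
    · refine ⟨(hs.1 e he).1, Finset.subset_empty.1 ?_⟩
      rw [← (hs.1 e he).2]
      exact Finset.inter_subset_inter_left hC
    · exact hs.1 y hy
  · rcases mem_shrink_emails.1 hy with rfl | ⟨hye, hy⟩ <;>
      rcases mem_shrink_emails.1 hz with rfl | ⟨hze, hz⟩
    · rfl
    · exact absurd hyz.symm (hne z hz hze)
    · exact absurd hyz (hne y hy hye)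
    · exact hs.2 y hy z hz hyz

@[simp]
theorem msg_toShrink : (toShrink e C x).msg = x.msg := by
  unfold toShrink
  split_ifs with h <;> simp [h]

@[simp]
theorem msg_ofShrink : (ofShrink e C x).msg = x.msg := by
  unfold ofShrink
  split_ifs with h <;> simp [h]

theorem toShrink_mem (hx : x ∈ s.emails) : toShrink e C x ∈ (s.shrink e C).emails := by
  unfold toShrink
  split_ifs with h
  · exact mem_shrink_emails.2 (Or.inl rfl)
  · exact mem_shrink_emails.2 (Or.inr ⟨h, hx⟩)

theorem ofShrink_mem (he : e ∈ s.emails) (hx : x ∈ (s.shrink e C).emails) :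
    ofShrink e C x ∈ s.emails := by
  unfold ofShrink
  rcases mem_shrink_emails.1 hx with rfl | ⟨-, hx⟩
  · rwa [if_pos rfl]
  · split_ifs
    exacts [he, hx]

theorem ofShrink_toShrink (hs : s.WF) (he : e ∈ s.emails) (hx : x ∈ s.emails) :
    ofShrink e C (toShrink e C x) = x := by
  by_cases hxe : x = e
  · simp [toShrink, ofShrink, hxe]
  · have hxC : x ≠ ⟨e.msg, C⟩ := fun h =>
      hxe (hs.2 x hx e he (by rw [h]))
    simp [toShrink, ofShrink, hxe, hxC]

theorem mem_bcc_toShrink (hi : i ∈ x.bcc) (hiC : x = e → i ∈ C) :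
    i ∈ (toShrink e C x).bcc := by
  unfold toShrink
  split_ifs with h
  exacts [hiC h, hi]

theorem mem_recip_or_bcc_toShrink {l : Note} (hi : i ∈ x.msg.recip ∪ x.bcc)
    (hl : l ∈ x.msg.FI) (hln : l ∉ (s.shrink e C).notes i) :
    i ∈ (toShrink e C x).msg.recip ∪ (toShrink e C x).bcc := by
  rw [msg_toShrink]
  rcases Finset.mem_union.1 hi with hi | hi
  · exact Finset.mem_union_left _ hi
  · refine Finset.mem_union_right _ (mem_bcc_toShrink hi fun hxe => ?_)
    subst hxe
    by_contra hiC
    exact hln (FI_subset_notes_shrink (Finset.mem_sdiff.2 ⟨hi, hiC⟩) hl)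

end EState

open EState in
theorem shrink_bcc_legal_general {Agent Note : Type} [DecidableEq Agent]
    [DecidableEq Note] (s : EState Agent Note) (hs : s.Legal)
    (e : Email Agent Note) (he : e ∈ s.emails) (C : Finset Agent) (hC : C ⊆ e.bcc)
    (hnofwd : ∀ e' ∈ s.emails, ∀ (i : Agent) (l : Note) (G : Finset Agent),
      e'.msg = Msg.fwd i l e.msg G → i ∉ e.bcc \ C) :
    (s.shrink e C).Legal := by
  obtain ⟨hwf, r, hirr, htrans, hL1, hL2, hL3⟩ := hs
  have hof : ∀ {x}, x ∈ (s.shrink e C).emails → ofShrink e C x ∈ s.emails := ofShrink_mem he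
  have hr : ∀ {y x}, y ∈ s.emails → r y (ofShrink e C x) →
      r (ofShrink e C (toShrink e C y)) (ofShrink e C x) := fun hy h => by
    rwa [ofShrink_toShrink hwf he hy]
  refine ⟨hwf.shrink he hC, fun a b => r (ofShrink e C a) (ofShrink e C b),
    fun x hx => hirr _ (hof hx),
    fun a ha b hb c hc => htrans _ (hof ha) _ (hof hb) _ (hof hc), ?_, ?_, ?_⟩
  · intro x hx i l m G hxm
    have hxm' : (ofShrink e C x).msg = .fwd i l m G := by rw [msg_ofShrink, hxm]
    obtain ⟨y, hy, rfl, hry, hi⟩ := hL1 _ (hof hx) i l _ G hxm'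
    refine ⟨toShrink e C y, toShrink_mem hy, msg_toShrink, hr hy hry, ?_⟩
    rcases Finset.mem_union.1 hi with hi | hi
    · exact Finset.mem_union_left _ hi
    · refine Finset.mem_union_right _ (mem_bcc_toShrink hi fun hye => ?_)
      subst hye
      by_contra hiC
      exact hnofwd _ (hof hx) i l G hxm' (Finset.mem_sdiff.2 ⟨hi, hiC⟩)
  · intro x hx i l G hxm hln
    obtain ⟨y, hy, hry, hi, hl⟩ := hL2 _ (hof hx) i l G (by rw [msg_ofShrink, hxm])
      fun h => hln (notes_subset_notes_shrink i h)
    exact ⟨toShrink e C y, toShrink_mem hy, hr hy hry,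
      mem_recip_or_bcc_toShrink hi hl hln, by rwa [msg_toShrink]⟩
  · intro x hx i l m G hxm hln
    obtain ⟨y, hy, hry, hi, hl⟩ := hL3 _ (hof hx) i l m G (by rw [msg_ofShrink, hxm])
      fun h => hln (notes_subset_notes_shrink i h)
    exact ⟨toShrink e C y, toShrink_mem hy, hr hy hry,
      mem_recip_or_bcc_toShrink hi hl hln, by rwa [msg_toShrink]⟩

/-- shrinking the BCC set of an email `m_B ∈ E` to `C ⊆ B` yields a legal
state, provided no agent in `B \ C` forwards `m` in `E`. -/
theorem shrink_bcc_legal {Agent Note : Type} [DecidableEq Agent] [Fintype Agent]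
    [Nonempty Agent] [DecidableEq Note] (s : EState Agent Note) (hs : s.Legal)
    (e : Email Agent Note) (he : e ∈ s.emails) (C : Finset Agent) (hC : C ⊆ e.bcc)
    (hnofwd : ∀ e' ∈ s.emails, ∀ (i : Agent) (l : Note) (G : Finset Agent),
      e'.msg = Msg.fwd i l e.msg G → i ∉ e.bcc \ C) :
    (s.shrink e C).Legal :=
  shrink_bcc_legal_general s hs e he C hC hnofwd
end

section
/- If s is a legal state, then there exists an email exchange starting in s that properly terminates. -/
section AuxProof

variable {Agent Note : Type} [DecidableEq Agent] [DecidableEq Note]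

/-- A transitive irreflexive relation on a finite set has a minimal element. -/
lemma exists_min_aux (r : Email Agent Note → Email Agent Note → Prop)
    (S : Finset (Email Agent Note))
    (hirr : ∀ e ∈ S, ¬ r e e)
    (htrans : ∀ e ∈ S, ∀ e' ∈ S, ∀ e'' ∈ S, r e e' → r e' e'' → r e e'') :
    ∀ n (E' : Finset (Email Agent Note)), E'.card ≤ n → E' ⊆ S → E'.Nonempty →
      ∃ e ∈ E', ∀ e' ∈ E', ¬ r e' e := by
  intro n
  induction n with
  | zero =>
    intro E' hc hsub hne
    have := Finset.card_pos.mpr hne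
    omega
  | succ n ih =>
    intro E' hc hsub hne
    classical
    obtain ⟨a, ha⟩ := hne
    by_cases h : ∀ e' ∈ E', ¬ r e' a
    · exact ⟨a, ha, h⟩
    · push_neg at h
      obtain ⟨b, hbE, hrba⟩ := h
      set E'' := E'.filter (fun x => r x a) with hE''
      have hsub'' : E'' ⊆ E' := Finset.filter_subset _ _
      have haNot : a ∉ E'' := by
        intro hmem
        exact hirr a (hsub ha) (Finset.mem_filter.mp hmem).2
      have hbE'' : b ∈ E'' := Finset.mem_filter.mpr ⟨hbE, hrba⟩
      have hlt : E''.card < E'.card :=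
        Finset.card_lt_card ⟨hsub'', fun hsup => haNot (hsup ha)⟩
      obtain ⟨e, heE'', hmin''⟩ := ih E'' (by omega) (hsub''.trans hsub) ⟨b, hbE''⟩
      refine ⟨e, hsub'' heE'', fun e' he' hre' => ?_⟩
      have hrea : r e a := (Finset.mem_filter.mp heE'').2
      have hre'a : r e' a :=
        htrans e' (hsub he') e (hsub (hsub'' heE'')) a (hsub ha) hre' hrea
      exact hmin'' e' (Finset.mem_filter.mpr ⟨he', hre'a⟩) hre'

lemma exchange_aux (s : EState Agent Note)
    (r : Email Agent Note → Email Agent Note → Prop)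
    (hirr : ∀ e ∈ s.emails, ¬ r e e)
    (htrans : ∀ e ∈ s.emails, ∀ e' ∈ s.emails, ∀ e'' ∈ s.emails, r e e' → r e' e'' → r e e'')
    (hL1 : ∀ e ∈ s.emails, ∀ (i : Agent) (l : Note) (m : Msg Agent Note) (G : Finset Agent),
      e.msg = Msg.fwd i l m G →
      ∃ e' ∈ s.emails, e'.msg = m ∧ r e' e ∧ i ∈ m.S ∪ m.recip ∪ e'.bcc)
    (hL2 : ∀ e ∈ s.emails, ∀ (i : Agent) (l : Note) (G : Finset Agent),
      e.msg = Msg.send i l G → l ∉ s.notes i →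
      ∃ e' ∈ s.emails, r e' e ∧ i ∈ e'.msg.recip ∪ e'.bcc ∧ l ∈ e'.msg.FI)
    (hL3 : ∀ e ∈ s.emails, ∀ (i : Agent) (l : Note) (m : Msg Agent Note) (G : Finset Agent),
      e.msg = Msg.fwd i l m G → l ∉ s.notes i →
      ∃ e' ∈ s.emails, r e' e ∧ i ∈ e'.msg.recip ∪ e'.bcc ∧ l ∈ e'.msg.FI) :
    ∀ n (E' : Finset (Email Agent Note)), E'.card ≤ n → E' ⊆ s.emails →
    ∀ σ : Mailbox Agent Note,
    (∀ j e'', e'' ∈ s.emails → e'' ∉ E' → j ∈ e''.agents → e''.msg ∈ σ j) →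
    ∃ cs : List (Config Agent Note),
      List.Chain Step (((⟨E', s.notes⟩ : EState Agent Note), σ) : Config Agent Note) cs ∧
      (((((⟨E', s.notes⟩ : EState Agent Note), σ) : Config Agent Note) :: cs).getLast
        (List.cons_ne_nil _ _)).1.emails = ∅ := by
  intro n
  induction n with
  | zero =>
    intro E' hc hsub σ hσ
    have hE : E' = ∅ := Finset.card_eq_zero.mp (Nat.le_zero.mp hc)
    subst hE
    exact ⟨[], List.Chain.nil, rfl⟩
  | succ n ih =>
    intro E' hc hsub σ hσ
    rcases E'.eq_empty_or_nonempty with hE | hne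
    · subst hE
      exact ⟨[], List.Chain.nil, rfl⟩
    · obtain ⟨e, heE, hmin⟩ := exists_min_aux r s.emails hirr htrans (n + 1) E' hc hsub hne
      have heS : e ∈ s.emails := hsub heE
      -- the key fact: the email `e` can be processed
      have hcp : CanProcess s.notes σ e.msg := by
        cases hm : e.msg with
        | send i l G =>
          by_cases hl : l ∈ s.notes i
          · exact Or.inl hl
          · obtain ⟨e', he'S, hre', hi, hlFI⟩ := hL2 e heS i l G hm hl
            have he'notE' : e' ∉ E' := fun h => hmin e' h hre'
            have hiag : i ∈ e'.agents := by
              unfold Email.agents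
              rcases Finset.mem_union.mp hi with h | h
              · exact Finset.mem_union.mpr (Or.inl (Finset.mem_union.mpr (Or.inr h)))
              · exact Finset.mem_union.mpr (Or.inr h)
            exact Or.inr ⟨e'.msg, hσ i e' he'S he'notE' hiag, hlFI⟩
        | fwd i l m G =>
          obtain ⟨e', he'S, he'm, hre', hi⟩ := hL1 e heS i l m G hm
          have he'notE' : e' ∉ E' := fun h => hmin e' h hre'
          have hiag : i ∈ e'.agents := by
            unfold Email.agents
            rw [he'm]
            exact hi
          have hmem : m ∈ σ i := by
            have := hσ i e' he'S he'notE' hiag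
            rwa [he'm] at this
          refine ⟨hmem, ?_⟩
          by_cases hl : l ∈ s.notes i
          · exact Or.inl hl
          · obtain ⟨e'', he''S, hre'', hi'', hlFI⟩ := hL3 e heS i l m G hm hl
            have he''notE' : e'' ∉ E' := fun h => hmin e'' h hre''
            have hiag'' : i ∈ e''.agents := by
              unfold Email.agents
              rcases Finset.mem_union.mp hi'' with h | h
              · exact Finset.mem_union.mpr (Or.inl (Finset.mem_union.mpr (Or.inr h)))
              · exact Finset.mem_union.mpr (Or.inr h)
            exact Or.inr ⟨e''.msg, hσ i e'' he''S he''notE' hiag'', hlFI⟩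
      have hcard : (E'.erase e).card ≤ n := by
        have := Finset.card_erase_of_mem heE
        have := Finset.card_pos.mpr hne
        omega
      have hinv : ∀ j e'', e'' ∈ s.emails → e'' ∉ E'.erase e → j ∈ e''.agents →
          e''.msg ∈ deliver σ e j := by
        intro j e'' he''S he''notE hjag
        by_cases he : e'' = e
        · subst he
          simp only [deliver, if_pos hjag]
          exact Or.inr rfl
        · have hnot : e'' ∉ E' := fun h => he''notE (Finset.mem_erase.mpr ⟨he, h⟩)
          have hm := hσ j e'' he''S hnot hjag
          simp only [deliver]
          split
          · exact Or.inl hm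
          · exact hm
      obtain ⟨cs, hchain, hlast⟩ := ih (E'.erase e) hcard
        ((Finset.erase_subset _ _).trans hsub) (deliver σ e) hinv
      refine ⟨(((⟨E'.erase e, s.notes⟩ : EState Agent Note), deliver σ e) : Config Agent Note)
        :: cs, ?_, ?_⟩
      · exact List.Chain.cons ⟨e, heE, hcp, rfl, rfl⟩ hchain
      · rw [List.getLast_cons (List.cons_ne_nil _ _)]
        exact hlast

end AuxProof

/-- every legal state admits a properly terminating email exchange. -/
theorem legal_implies_terminating_exchange {Agent Note : Type} [DecidableEq Agent]
    [Fintype Agent] [Nonempty Agent] [DecidableEq Note] (s : EState Agent Note)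
    (hs : s.Legal) :
    ∃ cs : List (Config Agent Note), IsExchange s cs ∧ ProperlyTerminates s cs := by
  obtain ⟨hwf, r, hirr, htrans, hL1, hL2, hL3⟩ := hs
  obtain ⟨cs, hchain, hlast⟩ := exchange_aux s r hirr htrans hL1 hL2 hL3 s.emails.card
    s.emails le_rfl (Finset.Subset.refl _) (fun _ => ∅) (fun _ _ h hn _ => absurd h hn)
  have hstart : startConfig s = ((⟨s.emails, s.notes⟩ : EState Agent Note),
      fun _ => (∅ : Set (Msg Agent Note))) := rfl
  refine ⟨cs, ⟨?_, ?_⟩, ?_⟩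
  · rw [hstart]; exact hchain
  · intro c' hstep
    obtain ⟨e, he, -⟩ := hstep
    have he' : e ∈ ((((⟨s.emails, s.notes⟩ : EState Agent Note),
        fun _ => (∅ : Set (Msg Agent Note))) :: cs).getLast
        (List.cons_ne_nil _ _)).1.emails := he
    rw [hlast] at he'
    exact absurd he' (Finset.notMem_empty e)
  · exact hlast
end
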